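/- arXiv:1906.08295 — 13 statements merged into one kernel-verified Lean document; each statement's English description precedes it below -/
import Mathlib

section
/- Suppose χ, a, f : [0,∞) → ℝ are smooth functions with a(r) > 0 and f(r) > 0 for all r ≥ 0, satisfying the field equations (E1), (E2), (E3) and the constraint (C) at every r ≥ 0 with self-interaction parameter Λ = 0. Suppose further that the throat boundary conditions χ'(0) = a'(0) = f'(0) = 0 hold with χ(0) ≠ 0, that the asymptotic flatness conditions χ(r) → 0, a(r) → 1 and f(r)/r² → 1 as r → ∞ hold, and that ω² ≤ μ². Then a contradiction follows; i.e., no such reflection-symmetric wormhole solution exists when Λ = 0. -/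
open Real Filter

noncomputable section

/-- `Λ̃ = (2ℓ+1)Λ/(4π)`. -/
def lamT (Λ : ℝ) (ℓ : ℕ) : ℝ := (2 * (ℓ : ℝ) + 1) * Λ / (4 * Real.pi)

/-- Field equation (E1):
`χ'' = -(f'/f + a'/a)·χ' + (1/a)·[μ² - ω²/a + ℓ(ℓ+1)/f - 2Λ̃χ²]·χ`. -/
def EqE1 (μ ω Λ : ℝ) (ℓ : ℕ) (χ a f : ℝ → ℝ) (r : ℝ) : Prop :=
  deriv (deriv χ) r =
    -(deriv f r / f r + deriv a r / a r) * deriv χ r +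
      (1 / a r) *
        (μ ^ 2 - ω ^ 2 / a r + (ℓ : ℝ) * ((ℓ : ℝ) + 1) / f r
          - 2 * lamT Λ ℓ * χ r ^ 2) * χ r

/-- Field equation (E2):
`a'' = -(f'/f)·a' + ((2ℓ+1)/(4π))·[μ² - 2ω²/a - Λ̃χ²]·χ²`. -/
def EqE2 (μ ω Λ : ℝ) (ℓ : ℕ) (χ a f : ℝ → ℝ) (r : ℝ) : Prop :=
  deriv (deriv a) r =
    -(deriv f r / f r) * deriv a r +
      ((2 * (ℓ : ℝ) + 1) / (4 * Real.pi)) *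
        (μ ^ 2 - 2 * ω ^ 2 / a r - lamT Λ ℓ * χ r ^ 2) * χ r ^ 2

/-- Field equation (E3):
`f'' = (1/a)·(-a'·f' + 2 + ((2ℓ+1)/(4π))·[(μ² - Λ̃χ²)·f + ℓ(ℓ+1)]·χ²)`. -/
def EqE3 (μ ω Λ : ℝ) (ℓ : ℕ) (χ a f : ℝ → ℝ) (r : ℝ) : Prop :=
  deriv (deriv f) r =
    (1 / a r) *
      (-(deriv a r) * deriv f r + 2 +
        ((2 * (ℓ : ℝ) + 1) / (4 * Real.pi)) *
          ((μ ^ 2 - lamT Λ ℓ * χ r ^ 2) * f r + (ℓ : ℝ) * ((ℓ : ℝ) + 1)) * χ r ^ 2)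

/-- Constraint (C):
`(f'/(2f))·(a' + a·f'/(2f)) - 1/f
  = ((2ℓ+1)/(8π))·[-a·χ'² + (μ² - Λ̃χ² - ω²/a + ℓ(ℓ+1)/f)·χ²]`. -/
def EqC (μ ω Λ : ℝ) (ℓ : ℕ) (χ a f : ℝ → ℝ) (r : ℝ) : Prop :=
  (deriv f r / (2 * f r)) * (deriv a r + a r * deriv f r / (2 * f r)) - 1 / f r =
    ((2 * (ℓ : ℝ) + 1) / (8 * Real.pi)) *
      (-(a r) * deriv χ r ^ 2 +
        (μ ^ 2 - lamT Λ ℓ * χ r ^ 2 - ω ^ 2 / a r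
          + (ℓ : ℝ) * ((ℓ : ℝ) + 1) / f r) * χ r ^ 2)

set_option maxHeartbeats 1000000 in
/-- Theorem 1 of the paper. There are no reflection-symmetric,
asymptotically flat wormhole solutions of the field equations when `Λ = 0`. -/
theorem no_reflection_symmetric_wormhole_of_lambda_zero
    (μ ω : ℝ) (ℓ : ℕ) (χ a f : ℝ → ℝ)
    (hχs : ContDiff ℝ (⊤ : ℕ∞) χ) (has : ContDiff ℝ (⊤ : ℕ∞) a) (hfs : ContDiff ℝ (⊤ : ℕ∞) f)
    (hapos : ∀ r : ℝ, 0 ≤ r → 0 < a r) (hfpos : ∀ r : ℝ, 0 ≤ r → 0 < f r)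
    (hE1 : ∀ r : ℝ, 0 ≤ r → EqE1 μ ω 0 ℓ χ a f r)
    (hE2 : ∀ r : ℝ, 0 ≤ r → EqE2 μ ω 0 ℓ χ a f r)
    (hE3 : ∀ r : ℝ, 0 ≤ r → EqE3 μ ω 0 ℓ χ a f r)
    (hC : ∀ r : ℝ, 0 ≤ r → EqC μ ω 0 ℓ χ a f r)
    (hχ'0 : deriv χ 0 = 0) (ha'0 : deriv a 0 = 0) (hf'0 : deriv f 0 = 0)
    (hχ0 : χ 0 ≠ 0)
    (hχ_inf : Tendsto χ atTop (nhds 0))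
    (ha_inf : Tendsto a atTop (nhds 1))
    (hf_inf : Tendsto (fun r => f r / r ^ 2) atTop (nhds 1))
    (hωμ : ω ^ 2 ≤ μ ^ 2) :
    False := by
  have hπ : (0:ℝ) < Real.pi := Real.pi_pos
  have hf0 := hfpos 0 le_rfl
  have ha0 := hapos 0 le_rfl
  have hχ0sq : 0 < χ 0 ^ 2 := by positivity
  have hLnn : (0:ℝ) ≤ (ℓ:ℝ) * ((ℓ:ℝ) + 1) := by positivity
  have hlam : lamT 0 ℓ = 0 := by simp [lamT]
  have hC0 := hC 0 le_rfl
  unfold EqC at hC0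
  rw [hlam, hχ'0, ha'0, hf'0] at hC0
  simp only [zero_div, zero_mul, mul_zero, add_zero, zero_add, neg_zero, zero_sub, zero_pow,
    sub_zero] at hC0
  -- hC0 should now be : -(1 / f 0) = ((2ℓ+1)/(8π)) * ((μ² - ω²/a 0 + L/f 0) * χ 0 ^ 2)
  have hk : (0:ℝ) < (2 * (ℓ:ℝ) + 1) / (8 * Real.pi) := by positivity
  have hneg : μ ^ 2 - ω ^ 2 / a 0 + (ℓ:ℝ) * ((ℓ:ℝ) + 1) / f 0 < 0 := by
    by_contra h
    push_neg at h
    have h1 : 0 ≤ ((2 * (ℓ:ℝ) + 1) / (8 * Real.pi)) *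
        ((μ ^ 2 - ω ^ 2 / a 0 + (ℓ:ℝ) * ((ℓ:ℝ) + 1) / f 0) * χ 0 ^ 2) := by positivity
    have h2 : 0 < 1 / f 0 := by positivity
    linarith [hC0]
  -- a 0 * μ² < ω²
  have key1 : a 0 * μ ^ 2 < ω ^ 2 := by
    have hL0 : 0 ≤ (ℓ:ℝ) * ((ℓ:ℝ) + 1) / f 0 := by positivity
    have : μ ^ 2 < ω ^ 2 / a 0 := by linarith
    calc a 0 * μ ^ 2 < a 0 * (ω ^ 2 / a 0) := by
          exact mul_lt_mul_of_pos_left this ha0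
      _ = ω ^ 2 := by field_simp
  have hω2 : 0 < ω ^ 2 := by nlinarith [sq_nonneg μ, sq_nonneg ω]
  have hμ2 : 0 < μ ^ 2 := lt_of_lt_of_le hω2 hωμ
  -- differentiability
  have hda : Differentiable ℝ a := has.differentiable (by simp)
  have hdda : Differentiable ℝ (deriv a) :=
    (contDiff_infty_iff_deriv.mp (has.of_le (by simp))).2.differentiable (by simp)
  have hdf : Differentiable ℝ f := hfs.differentiable (by simp)
  have hca : Continuous a := hda.continuous
  set g : ℝ → ℝ := fun s => f s * deriv a s with hg
  have hdg : Differentiable ℝ g := hdf.mul hdda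
  have hg0 : g 0 = 0 := by simp [hg, ha'0]
  have hderivg : ∀ s : ℝ, 0 ≤ s → a s * μ ^ 2 ≤ 2 * ω ^ 2 → deriv g s ≤ 0 := by
    intro s hs hbs
    have hE := hE2 s hs
    unfold EqE2 at hE
    rw [hlam] at hE
    have hfs' : f s ≠ 0 := (hfpos s hs).ne'
    have hdm : deriv g s = deriv f s * deriv a s + f s * deriv (deriv a) s :=
      deriv_mul (hdf s) (hdda s)
    rw [hdm, hE]
    have expand : deriv f s * deriv a s +
        f s * (-(deriv f s / f s) * deriv a s +
          (2 * (ℓ:ℝ) + 1) / (4 * Real.pi) *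
            (μ ^ 2 - 2 * ω ^ 2 / a s - 0 * χ s ^ 2) * χ s ^ 2)
        = ((2 * (ℓ:ℝ) + 1) / (4 * Real.pi)) * ((μ ^ 2 - 2 * ω ^ 2 / a s) * (χ s ^ 2 * f s)) := by
      field_simp
      ring
    rw [expand]
    have hbr : μ ^ 2 - 2 * ω ^ 2 / a s ≤ 0 := by
      rw [sub_nonpos, le_div_iff₀ (hapos s hs)]
      nlinarith
    have hc : (0:ℝ) < (2 * (ℓ:ℝ) + 1) / (4 * Real.pi) := by positivity
    have hx2 : (0:ℝ) ≤ χ s ^ 2 * f s := mul_nonneg (sq_nonneg _) (hfpos s hs).le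
    exact mul_nonpos_of_nonneg_of_nonpos hc.le (mul_nonpos_of_nonpos_of_nonneg hbr hx2)
  -- main monotonicity claim
  have hmono : ∀ x : ℝ, 0 < x → (∀ s ∈ Set.Icc (0:ℝ) x, a s * μ ^ 2 ≤ 2 * ω ^ 2) →
      ∀ s ∈ Set.Icc (0:ℝ) x, a s ≤ a 0 := by
    intro x hx hbd
    have hg_anti : AntitoneOn g (Set.Icc 0 x) := by
      apply antitoneOn_of_deriv_nonpos (convex_Icc 0 x) hdg.continuous.continuousOn
        (hdg.differentiableOn)
      intro s hs
      rw [interior_Icc] at hs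
      exact hderivg s hs.1.le (hbd s ⟨hs.1.le, hs.2.le⟩)
    have hgle : ∀ s ∈ Set.Icc (0:ℝ) x, g s ≤ 0 := by
      intro s hs
      have := hg_anti ⟨le_rfl, hx.le⟩ hs hs.1
      rw [hg0] at this
      exact this
    have ha'le : ∀ s ∈ interior (Set.Icc (0:ℝ) x), deriv a s ≤ 0 := by
      rw [interior_Icc]
      intro s hs
      have hgs : f s * deriv a s ≤ 0 := hgle s ⟨hs.1.le, hs.2.le⟩
      have hfps := hfpos s hs.1.le
      by_contra hp
      push_neg at hp
      nlinarith [mul_pos hfps hp]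
    have ha_anti : AntitoneOn a (Set.Icc 0 x) :=
      antitoneOn_of_deriv_nonpos (convex_Icc 0 x) hca.continuousOn
        hda.differentiableOn ha'le
    intro s hs
    exact ha_anti ⟨le_rfl, hx.le⟩ hs hs.1
  -- a r ≤ a 0 for all r ≥ 0
  have hle : ∀ r : ℝ, 0 ≤ r → a r ≤ a 0 := by
    intro r hr
    by_contra hgt
    push_neg at hgt
    set S : Set ℝ := {s | 0 ≤ s ∧ a 0 < a s} with hS
    have hne : S.Nonempty := ⟨r, hr, hgt⟩
    have hbdd : BddBelow S := ⟨0, fun s hs => hs.1⟩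
    set t := sInf S with ht
    have ht0 : 0 ≤ t := le_csInf hne fun s hs => hs.1
    have hlt_t : ∀ s : ℝ, 0 ≤ s → s < t → a s ≤ a 0 := by
      intro s hs hst
      by_contra h
      push_neg at h
      exact absurd (csInf_le hbdd ⟨hs, h⟩) (not_le.mpr hst)
    have hat : a t ≤ a 0 := by
      rcases eq_or_lt_of_le ht0 with h0 | h0
      · rw [← h0]
      · have hNB : (nhdsWithin t (Set.Ioo 0 t)).NeBot := by
          rw [← mem_closure_iff_nhdsWithin_neBot, closure_Ioo (ne_of_lt h0)]
          exact ⟨ht0, le_rfl⟩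
        have htend : Tendsto a (nhdsWithin t (Set.Ioo 0 t)) (nhds (a t)) :=
          (hca.tendsto t).mono_left nhdsWithin_le_nhds
        exact le_of_tendsto htend (eventually_of_mem self_mem_nhdsWithin
          fun s hs => hlt_t s hs.1.le hs.2)
    have hat2 : a t * μ ^ 2 < 2 * ω ^ 2 := by
      linarith [mul_le_mul_of_nonneg_right hat (sq_nonneg μ)]
    have hcont : ContinuousAt (fun s => a s * μ ^ 2) t :=
      (hca.mul continuous_const).continuousAt
    have hmem : {s : ℝ | a s * μ ^ 2 < 2 * ω ^ 2} ∈ nhds t :=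
      hcont (Iio_mem_nhds hat2)
    obtain ⟨ε, hε, hball⟩ := Metric.mem_nhds_iff.mp hmem
    set x := t + ε / 2 with hx
    have hxpos : 0 < x := by simp only [hx]; linarith
    have hbound : ∀ s ∈ Set.Icc (0:ℝ) x, a s * μ ^ 2 ≤ 2 * ω ^ 2 := by
      intro s hs
      rcases lt_or_ge s t with h | h
      · have := hlt_t s hs.1 h
        linarith [mul_le_mul_of_nonneg_right this (sq_nonneg μ)]
      · have hball' : s ∈ Metric.ball t ε := by
          rw [Metric.mem_ball, Real.dist_eq, abs_of_nonneg (by linarith)]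
          have := hs.2
          simp only [hx] at this
          linarith
        exact (hball hball').le
    obtain ⟨s, hsS, hslt⟩ := exists_lt_of_csInf_lt hne (show sInf S < x by
      rw [← ht]; simp only [hx]; linarith)
    have := hmono x hxpos hbound s ⟨hsS.1, hslt.le⟩
    exact absurd this (not_le.mpr hsS.2)
  have h1le : (1:ℝ) ≤ a 0 :=
    le_of_tendsto ha_inf (Filter.eventually_atTop.mpr ⟨0, fun r hr => hle r hr⟩)
  nlinarith [mul_le_mul_of_nonneg_right h1le (sq_nonneg μ)]
end
end

section
/- Let r be a real number at which a(r) > 0 and f(r) > 0, and suppose the field equation (E3) and the constraint (C) both hold at r (for twice differentiable χ, a, f). Then f''(r) = f(r)·( (1/2)·(f'(r)/f(r))² + ((2ℓ+1)/(4π))·( χ'(r)² + ω²·χ(r)²/a(r)² ) ). In particular f''(r) ≥ 0 at every such point. -/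
open Real Filter

noncomputable section

/-- combining (E3) and (C) at a point yields
`f'' = f·(½(f'/f)² + ((2ℓ+1)/(4π))·(χ'² + ω²χ²/a²))`, hence `f'' ≥ 0`. -/
theorem convexity_identity_pointwise
    (μ ω Λ : ℝ) (ℓ : ℕ) (χ a f : ℝ → ℝ) (r : ℝ)
    (hχ1 : DifferentiableAt ℝ χ r) (hχ2 : DifferentiableAt ℝ (deriv χ) r)
    (ha1 : DifferentiableAt ℝ a r) (ha2 : DifferentiableAt ℝ (deriv a) r)
    (hf1 : DifferentiableAt ℝ f r) (hf2 : DifferentiableAt ℝ (deriv f) r)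
    (hapos : 0 < a r) (hfpos : 0 < f r)
    (hE3 : EqE3 μ ω Λ ℓ χ a f r) (hC : EqC μ ω Λ ℓ χ a f r) :
    deriv (deriv f) r =
      f r * ((1 / 2) * (deriv f r / f r) ^ 2 +
        ((2 * (ℓ : ℝ) + 1) / (4 * Real.pi)) *
          (deriv χ r ^ 2 + ω ^ 2 * χ r ^ 2 / a r ^ 2)) ∧
    0 ≤ deriv (deriv f) r := by
  have hπ : (0:ℝ) < Real.pi := Real.pi_pos
  have ha0 : a r ≠ 0 := ne_of_gt hapos
  have hf0 : f r ≠ 0 := ne_of_gt hfpos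
  have hπ0 : Real.pi ≠ 0 := ne_of_gt hπ
  unfold EqE3 at hE3
  unfold EqC at hC
  have key : deriv (deriv f) r =
      f r * ((1 / 2) * (deriv f r / f r) ^ 2 +
        ((2 * (ℓ : ℝ) + 1) / (4 * Real.pi)) *
          (deriv χ r ^ 2 + ω ^ 2 * χ r ^ 2 / a r ^ 2)) := by
    rw [hE3]
    linear_combination (norm := (field_simp; ring)) (-(2 * f r / a r)) * hC
  refine ⟨key, ?_⟩
  rw [key]
  have h1 : (0:ℝ) ≤ (2 * (ℓ : ℝ) + 1) / (4 * Real.pi) := by positivity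
  have h2 : (0:ℝ) ≤ deriv χ r ^ 2 + ω ^ 2 * χ r ^ 2 / a r ^ 2 := by positivity
  positivity
end
end

section
/- Suppose a(0) > 0, f(0) > 0, the throat boundary conditions χ'(0) = a'(0) = f'(0) = 0 hold, χ(0) ≠ 0, and the constraint (C) holds at r = 0. Then (1 + ((2ℓ+1)·ℓ·(ℓ+1)/(8π))·χ(0)²)/f(0) = ((2ℓ+1)/(8π))·(ω²/a(0) - μ² + Λ̃·χ(0)²)·χ(0)², and consequently the strict inequality ω²/a(0) + Λ̃·χ(0)² > μ² holds. -/
open Real Filter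

noncomputable section

/-- the constraint (C) at the throat fixes the throat radius,
`(1 + ((2ℓ+1)ℓ(ℓ+1)/(8π))χ(0)²)/f(0) = ((2ℓ+1)/(8π))(ω²/a(0) - μ² + Λ̃χ(0)²)χ(0)²`,
and forces the strict inequality `ω²/a(0) + Λ̃χ(0)² > μ²`. -/
theorem throat_constraint_and_inequality
    (μ ω Λ : ℝ) (ℓ : ℕ) (χ a f : ℝ → ℝ)
    (ha0 : 0 < a 0) (hf0 : 0 < f 0)
    (hχ'0 : deriv χ 0 = 0) (ha'0 : deriv a 0 = 0) (hf'0 : deriv f 0 = 0)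
    (hχ0 : χ 0 ≠ 0)
    (hC : EqC μ ω Λ ℓ χ a f 0) :
    (1 + (2 * (ℓ : ℝ) + 1) * (ℓ : ℝ) * ((ℓ : ℝ) + 1) / (8 * Real.pi) * χ 0 ^ 2) / f 0 =
      ((2 * (ℓ : ℝ) + 1) / (8 * Real.pi)) *
        (ω ^ 2 / a 0 - μ ^ 2 + lamT Λ ℓ * χ 0 ^ 2) * χ 0 ^ 2 ∧
    μ ^ 2 < ω ^ 2 / a 0 + lamT Λ ℓ * χ 0 ^ 2 := by
  unfold EqC at hC
  rw [hχ'0, ha'0, hf'0] at hC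
  have hπ : (0:ℝ) < Real.pi := Real.pi_pos
  have hχ2 : (0:ℝ) < χ 0 ^ 2 := by positivity
  have hℓ : (0:ℝ) ≤ (ℓ:ℝ) := Nat.cast_nonneg ℓ
  have heq : (1 + (2 * (ℓ : ℝ) + 1) * (ℓ : ℝ) * ((ℓ : ℝ) + 1) / (8 * Real.pi) * χ 0 ^ 2) / f 0 =
      ((2 * (ℓ : ℝ) + 1) / (8 * Real.pi)) *
        (ω ^ 2 / a 0 - μ ^ 2 + lamT Λ ℓ * χ 0 ^ 2) * χ 0 ^ 2 := by
    field_simp at hC ⊢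
    nlinarith [hC, hπ, hf0.ne', ha0.ne']
  refine ⟨heq, ?_⟩
  have hL : 0 < (1 + (2 * (ℓ : ℝ) + 1) * (ℓ : ℝ) * ((ℓ : ℝ) + 1) / (8 * Real.pi) * χ 0 ^ 2) / f 0 := by
    positivity
  rw [heq] at hL
  have hc : 0 < (2 * (ℓ : ℝ) + 1) / (8 * Real.pi) := by positivity
  nlinarith [mul_pos hc hχ2, hL, hχ2, hc]
end
end

section
/- Suppose a(0) > 0, f(0) > 0, the throat boundary conditions χ'(0) = a'(0) = f'(0) = 0 hold, χ(0) ≠ 0, ω ≠ 0, and both the field equation (E3) and the constraint (C) hold at r = 0. Then f''(0) > 0; in other words, the squared areal radius f has a strict local minimum at the throat r = 0. -/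
/-!
Subtracting `2f` times the constraint (C) from `a` times (E3) cancels the potential term
`(μ² - Λ̃χ²) f + ℓ(ℓ+1)` together with the mixed term `a' f'`, and leaves `f''` as a sum of
nonnegative terms, `f'' = f'² / (2f) + (2ℓ+1)/(4π) · f · (χ'² + ω²χ²/a²)`, the last of which is
positive when `ωχ ≠ 0`.
-/

open Real Filter

noncomputable section

theorem deriv_deriv_eq_of_eqE3_of_eqC {μ ω Λ : ℝ} {ℓ : ℕ} {χ a f : ℝ → ℝ} {r : ℝ}
    (ha : a r ≠ 0) (hf : f r ≠ 0) (hE3 : EqE3 μ ω Λ ℓ χ a f r) (hC : EqC μ ω Λ ℓ χ a f r) :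
    deriv (deriv f) r = deriv f r ^ 2 / (2 * f r) +
      (2 * (ℓ : ℝ) + 1) / (4 * π) * f r * (deriv χ r ^ 2 + ω ^ 2 * χ r ^ 2 / a r ^ 2) := by
  rw [EqC] at hC
  rw [hE3]
  field_simp at hC ⊢
  linear_combination (-1 / 2 : ℝ) * hC

theorem deriv_deriv_pos_of_eqE3_of_eqC {μ ω Λ : ℝ} {ℓ : ℕ} {χ a f : ℝ → ℝ} {r : ℝ}
    (ha : a r ≠ 0) (hf : 0 < f r) (hχ : χ r ≠ 0) (hω : ω ≠ 0)
    (hE3 : EqE3 μ ω Λ ℓ χ a f r) (hC : EqC μ ω Λ ℓ χ a f r) :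
    0 < deriv (deriv f) r := by
  rw [deriv_deriv_eq_of_eqE3_of_eqC ha hf.ne' hE3 hC]
  positivity

theorem throat_strict_minimum_general
    (μ ω Λ : ℝ) (ℓ : ℕ) (χ a f : ℝ → ℝ)
    (ha0 : 0 < a 0) (hf0 : 0 < f 0)
    (hχ0 : χ 0 ≠ 0) (hω : ω ≠ 0)
    (hE3 : EqE3 μ ω Λ ℓ χ a f 0) (hC : EqC μ ω Λ ℓ χ a f 0) :
    0 < deriv (deriv f) 0 :=
  deriv_deriv_pos_of_eqE3_of_eqC ha0.ne' hf0 hχ0 hω hE3 hC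

/-- for `ω ≠ 0` and `χ(0) ≠ 0`, (E3) and (C) at the throat give
`f''(0) > 0`: the squared areal radius has a strict local minimum at the throat. -/
theorem throat_strict_minimum
    (μ ω Λ : ℝ) (ℓ : ℕ) (χ a f : ℝ → ℝ)
    (ha0 : 0 < a 0) (hf0 : 0 < f 0)
    (hχ'0 : deriv χ 0 = 0) (ha'0 : deriv a 0 = 0) (hf'0 : deriv f 0 = 0)
    (hχ0 : χ 0 ≠ 0) (hω : ω ≠ 0)
    (hE3 : EqE3 μ ω Λ ℓ χ a f 0) (hC : EqC μ ω Λ ℓ χ a f 0) :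
    0 < deriv (deriv f) 0 :=
  throat_strict_minimum_general μ ω Λ ℓ χ a f ha0 hf0 hχ0 hω hE3 hC
end
end

section
/- Scaling invariance of the wormhole equations: let χ, a, f : ℝ → ℝ be twice differentiable with a > 0 and f > 0 everywhere, satisfying the field equations (E1), (E2), (E3) and the constraint (C) with parameters (μ, ω, Λ, ℓ) at every r. Then for every B > 0 and every sign ε ∈ {+1, -1}, the functions χ̃(r) = ε·χ(√B·r), ã(r) = a(√B·r)/B and f̃(r) = f(√B·r) satisfy (E1), (E2), (E3) and (C) with parameters (μ, ω/√B, Λ, ℓ) at every r. -/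
open Real Filter

noncomputable section

/-! Rescaling `r ↦ c r` multiplies every derivative by `c`, so with `a ↦ a / c²` and
`ω ↦ ω / c` each term of (E2) and (C) is unchanged, while each term of (E1) and (E3) picks up
the same factor `c²`. The field `χ` enters (E2), (E3), (C) only through `χ²` and (E1) is odd in
`χ`, which allows the sign `ε`. -/

theorem deriv_comp_mul_left' (c : ℝ) (g : ℝ → ℝ) :
    deriv (fun s => g (c * s)) = fun s => c * deriv g (c * s) :=
  funext (deriv_comp_mul_left c g)

section Rescaling

variable {μ ω Λ c ε : ℝ} {ℓ : ℕ} {χ a f : ℝ → ℝ} {r : ℝ}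

theorem EqE1.rescale (hc : c ≠ 0) (hε : ε ^ 2 = 1) (h : EqE1 μ ω Λ ℓ χ a f (c * r)) :
    EqE1 μ (ω / c) Λ ℓ (fun s => ε * χ (c * s)) (fun s => a (c * s) / c ^ 2)
      (fun s => f (c * s)) r := by
  unfold EqE1 at h ⊢
  simp only [div_eq_mul_inv, deriv_const_mul_field', deriv_mul_const_field',
    deriv_comp_mul_left', mul_pow ε, hε, one_mul]
  rw [h]
  field_simp

theorem EqE2.rescale (hc : c ≠ 0) (hε : ε ^ 2 = 1) (h : EqE2 μ ω Λ ℓ χ a f (c * r)) :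
    EqE2 μ (ω / c) Λ ℓ (fun s => ε * χ (c * s)) (fun s => a (c * s) / c ^ 2)
      (fun s => f (c * s)) r := by
  unfold EqE2 at h ⊢
  simp only [div_eq_mul_inv, deriv_const_mul_field', deriv_mul_const_field',
    deriv_comp_mul_left', mul_pow ε, hε, one_mul]
  rw [h]
  field_simp

theorem EqE3.rescale (hc : c ≠ 0) (hε : ε ^ 2 = 1) (h : EqE3 μ ω Λ ℓ χ a f (c * r)) :
    EqE3 μ (ω / c) Λ ℓ (fun s => ε * χ (c * s)) (fun s => a (c * s) / c ^ 2)
      (fun s => f (c * s)) r := by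
  unfold EqE3 at h ⊢
  simp only [div_eq_mul_inv, deriv_const_mul_field', deriv_mul_const_field',
    deriv_comp_mul_left', mul_pow ε, hε, one_mul]
  rw [h]
  field_simp

theorem EqC.rescale (hc : c ≠ 0) (hε : ε ^ 2 = 1) (h : EqC μ ω Λ ℓ χ a f (c * r)) :
    EqC μ (ω / c) Λ ℓ (fun s => ε * χ (c * s)) (fun s => a (c * s) / c ^ 2)
      (fun s => f (c * s)) r := by
  unfold EqC at h ⊢
  simp only [div_eq_mul_inv, deriv_const_mul_field', deriv_mul_const_field',
    deriv_comp_mul_left', mul_pow ε, hε, one_mul]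
  convert h using 1 <;> field_simp

end Rescaling

theorem scaling_invariance_general
    (μ ω Λ : ℝ) (ℓ : ℕ) (χ a f : ℝ → ℝ)
    (hE1 : ∀ r : ℝ, EqE1 μ ω Λ ℓ χ a f r)
    (hE2 : ∀ r : ℝ, EqE2 μ ω Λ ℓ χ a f r)
    (hE3 : ∀ r : ℝ, EqE3 μ ω Λ ℓ χ a f r)
    (hC : ∀ r : ℝ, EqC μ ω Λ ℓ χ a f r)
    (B : ℝ) (hB : 0 < B) (ε : ℝ) (hε : ε = 1 ∨ ε = -1) (r : ℝ) :
    EqE1 μ (ω / Real.sqrt B) Λ ℓ (fun s => ε * χ (Real.sqrt B * s))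
        (fun s => a (Real.sqrt B * s) / B) (fun s => f (Real.sqrt B * s)) r ∧
    EqE2 μ (ω / Real.sqrt B) Λ ℓ (fun s => ε * χ (Real.sqrt B * s))
        (fun s => a (Real.sqrt B * s) / B) (fun s => f (Real.sqrt B * s)) r ∧
    EqE3 μ (ω / Real.sqrt B) Λ ℓ (fun s => ε * χ (Real.sqrt B * s))
        (fun s => a (Real.sqrt B * s) / B) (fun s => f (Real.sqrt B * s)) r ∧
    EqC μ (ω / Real.sqrt B) Λ ℓ (fun s => ε * χ (Real.sqrt B * s))
        (fun s => a (Real.sqrt B * s) / B) (fun s => f (Real.sqrt B * s)) r := by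
  have hc : Real.sqrt B ≠ 0 := (Real.sqrt_pos.mpr hB).ne'
  have hε2 : ε ^ 2 = 1 := by rcases hε with rfl | rfl <;> norm_num
  have h1 := (hE1 (Real.sqrt B * r)).rescale hc hε2
  have h2 := (hE2 (Real.sqrt B * r)).rescale hc hε2
  have h3 := (hE3 (Real.sqrt B * r)).rescale hc hε2
  have h4 := (hC (Real.sqrt B * r)).rescale hc hε2
  rw [Real.sq_sqrt hB.le] at h1 h2 h3 h4
  exact ⟨h1, h2, h3, h4⟩

/-- scaling invariance of the wormhole system. If `(χ, a, f)`
solves (E1)–(E3) and (C) with parameters `(μ, ω, Λ, ℓ)`, then for any `B > 0`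
and sign `ε = ±1`, the rescaled functions `r ↦ ε·χ(√B·r)`, `r ↦ a(√B·r)/B`,
`r ↦ f(√B·r)` solve the system with parameters `(μ, ω/√B, Λ, ℓ)`. -/
theorem scaling_invariance
    (μ ω Λ : ℝ) (ℓ : ℕ) (χ a f : ℝ → ℝ)
    (hχ1 : Differentiable ℝ χ) (hχ2 : Differentiable ℝ (deriv χ))
    (ha1 : Differentiable ℝ a) (ha2 : Differentiable ℝ (deriv a))
    (hf1 : Differentiable ℝ f) (hf2 : Differentiable ℝ (deriv f))
    (hapos : ∀ r : ℝ, 0 < a r) (hfpos : ∀ r : ℝ, 0 < f r)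
    (hE1 : ∀ r : ℝ, EqE1 μ ω Λ ℓ χ a f r)
    (hE2 : ∀ r : ℝ, EqE2 μ ω Λ ℓ χ a f r)
    (hE3 : ∀ r : ℝ, EqE3 μ ω Λ ℓ χ a f r)
    (hC : ∀ r : ℝ, EqC μ ω Λ ℓ χ a f r)
    (B : ℝ) (hB : 0 < B) (ε : ℝ) (hε : ε = 1 ∨ ε = -1) (r : ℝ) :
    EqE1 μ (ω / Real.sqrt B) Λ ℓ (fun s => ε * χ (Real.sqrt B * s))
        (fun s => a (Real.sqrt B * s) / B) (fun s => f (Real.sqrt B * s)) r ∧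
    EqE2 μ (ω / Real.sqrt B) Λ ℓ (fun s => ε * χ (Real.sqrt B * s))
        (fun s => a (Real.sqrt B * s) / B) (fun s => f (Real.sqrt B * s)) r ∧
    EqE3 μ (ω / Real.sqrt B) Λ ℓ (fun s => ε * χ (Real.sqrt B * s))
        (fun s => a (Real.sqrt B * s) / B) (fun s => f (Real.sqrt B * s)) r ∧
    EqC μ (ω / Real.sqrt B) Λ ℓ (fun s => ε * χ (Real.sqrt B * s))
        (fun s => a (Real.sqrt B * s) / B) (fun s => f (Real.sqrt B * s)) r :=
  scaling_invariance_general μ ω Λ ℓ χ a f hE1 hE2 hE3 hC B hB ε hε r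
end
end

section
/- Let χ, a, f be smooth real functions on an interval I with a > 0 and f > 0, and suppose the field equation (E3) and the constraint (C) hold at every point of I. Define R = √f, the Misner–Sharp mass M = (R/2)·(1 - a·(R')²) = (√f/2)·(1 - a·f'²/(4f)), and the rescaled energy density ρ̂ = -((2ℓ+1)/(8π))·[a·χ'² + (ℓ(ℓ+1)/f + μ² - Λ̃χ² + ω²/a)·χ²]. Then M'(r) = (1/2)·ρ̂(r)·f(r)·R'(r) = (1/4)·ρ̂(r)·√(f(r))·f'(r) for all r ∈ I. -/
open Real Filter

noncomputable section

/-- The rescaled energy density `ρ̂ = 8πρ` measured by static observers. -/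
def rhoHat (μ ω Λ : ℝ) (ℓ : ℕ) (χ a f : ℝ → ℝ) (r : ℝ) : ℝ :=
  -((2 * (ℓ : ℝ) + 1) / (8 * Real.pi)) *
    (a r * deriv χ r ^ 2 +
      ((ℓ : ℝ) * ((ℓ : ℝ) + 1) / f r + μ ^ 2 - lamT Λ ℓ * χ r ^ 2 + ω ^ 2 / a r) * χ r ^ 2)

/-- The Misner–Sharp mass `M = (√f/2)·(1 - a·f'²/(4f))`. -/
def misnerSharp (a f : ℝ → ℝ) (r : ℝ) : ℝ :=
  Real.sqrt (f r) / 2 * (1 - a r * deriv f r ^ 2 / (4 * f r))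

set_option maxHeartbeats 1600000 in
/-- `M' = ½·ρ̂·f·R' = ¼·ρ̂·√f·f'`, with `R = √f`. -/
theorem misnerSharp_deriv
    (μ ω Λ : ℝ) (ℓ : ℕ) (I : Set ℝ) (hIopen : IsOpen I)
    (χ a f : ℝ → ℝ)
    (hχs : ContDiffOn ℝ (⊤ : ℕ∞) χ I) (has : ContDiffOn ℝ (⊤ : ℕ∞) a I) (hfs : ContDiffOn ℝ (⊤ : ℕ∞) f I)
    (hapos : ∀ r ∈ I, 0 < a r) (hfpos : ∀ r ∈ I, 0 < f r)
    (hE3 : ∀ r ∈ I, EqE3 μ ω Λ ℓ χ a f r) (hC : ∀ r ∈ I, EqC μ ω Λ ℓ χ a f r) :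
    ∀ r ∈ I,
      deriv (misnerSharp a f) r =
        (1 / 2) * rhoHat μ ω Λ ℓ χ a f r * f r * deriv (fun s => Real.sqrt (f s)) r ∧
      deriv (misnerSharp a f) r =
        (1 / 4) * rhoHat μ ω Λ ℓ χ a f r * Real.sqrt (f r) * deriv f r := by
  intro r hr
  have hrI : I ∈ nhds r := hIopen.mem_nhds hr
  have hF : 0 < f r := hfpos r hr
  have hA : 0 < a r := hapos r hr
  have hS : 0 < Real.sqrt (f r) := Real.sqrt_pos.mpr hF
  have hS2 : Real.sqrt (f r) ^ 2 = f r := Real.sq_sqrt hF.le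
  have hπ : (0:ℝ) < Real.pi := Real.pi_pos
  have hdf : ContDiffOn ℝ (⊤ : ℕ∞) (deriv f) I := hfs.deriv_of_isOpen hIopen (by simp)
  have hfd : HasDerivAt f (deriv f r) r :=
    ((hfs.contDiffAt hrI).differentiableAt (by simp)).hasDerivAt
  have hfd' : HasDerivAt (deriv f) (deriv (deriv f) r) r :=
    ((hdf.contDiffAt hrI).differentiableAt (by simp)).hasDerivAt
  have had : HasDerivAt a (deriv a r) r :=
    ((has.contDiffAt hrI).differentiableAt (by simp)).hasDerivAt
  have h1 : HasDerivAt (fun s => Real.sqrt (f s)) (deriv f r / (2 * Real.sqrt (f r))) r :=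
    hfd.sqrt hF.ne'
  have h2 := (h1.div_const 2).mul
    (((had.mul (hfd'.pow 2)).div (hfd.const_mul 4) (by positivity)).const_sub 1)
  have hMS : deriv (misnerSharp a f) r = _ := h2.deriv
  simp only [Pi.mul_apply, Pi.div_apply, Pi.pow_apply] at hMS
  have e3 := hE3 r hr
  have c := hC r hr
  unfold EqE3 at e3
  unfold EqC at c
  rw [hMS, h1.deriv]
  unfold rhoHat lamT at *
  set S := Real.sqrt (f r) with hSdef
  rw [← hS2] at e3 c ⊢
  rw [e3]
  constructor
  · linear_combination (norm := (field_simp; ring1)) (S * deriv f r / 4) * c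
  · linear_combination (norm := (field_simp; ring1)) (S * deriv f r / 4) * c
end
end

section
/- Suppose a(0) > 0, f(0) > 0, the throat boundary conditions χ'(0) = a'(0) = f'(0) = 0 hold, and the constraint (C) holds at r = 0. Define the rescaled energy density ρ̂ = -((2ℓ+1)/(8π))·[a·χ'² + (ℓ(ℓ+1)/f + μ² - Λ̃χ² + ω²/a)·χ²]. Then ρ̂(0) = 1/f(0) - ((2ℓ+1)/(4π))·ω²·χ(0)²/a(0). In particular, if ω = 0 then ρ̂(0) = 1/f(0) > 0, i.e., the energy density measured by static observers is strictly positive at the throat. -/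
open Real Filter

noncomputable section

/-! Adding the constraint (C) to the definition of `ρ̂` cancels the potential terms
(`μ²`, `Λ̃χ²`, `ℓ(ℓ+1)/f`) and leaves only the geometry, the gradient `χ'²` and the
frequency term `ω²/a`; at the throat `χ'` and `f'` vanish. -/

theorem rhoHat_eq_of_eqC {μ ω Λ : ℝ} {ℓ : ℕ} {χ a f : ℝ → ℝ} {r : ℝ}
    (hC : EqC μ ω Λ ℓ χ a f r) :
    rhoHat μ ω Λ ℓ χ a f r =
      1 / f r - deriv f r / (2 * f r) * (deriv a r + a r * deriv f r / (2 * f r))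
        - (2 * (ℓ : ℝ) + 1) / (4 * π) * (a r * deriv χ r ^ 2 + ω ^ 2 * χ r ^ 2 / a r) := by
  unfold EqC at hC
  unfold rhoHat
  linear_combination hC

theorem rhoHat_eq_of_eqC_of_deriv_eq_zero {μ ω Λ : ℝ} {ℓ : ℕ} {χ a f : ℝ → ℝ} {r : ℝ}
    (hC : EqC μ ω Λ ℓ χ a f r) (hχ' : deriv χ r = 0) (hf' : deriv f r = 0) :
    rhoHat μ ω Λ ℓ χ a f r =
      1 / f r - (2 * (ℓ : ℝ) + 1) / (4 * π) * ω ^ 2 * χ r ^ 2 / a r := by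
  rw [rhoHat_eq_of_eqC hC, hχ', hf']
  ring

theorem energy_density_at_throat_general
    (μ ω Λ : ℝ) (ℓ : ℕ) (χ a f : ℝ → ℝ)
    (hf0 : 0 < f 0)
    (hχ'0 : deriv χ 0 = 0) (hf'0 : deriv f 0 = 0)
    (hC : EqC μ ω Λ ℓ χ a f 0) :
    rhoHat μ ω Λ ℓ χ a f 0 =
      1 / f 0 - ((2 * (ℓ : ℝ) + 1) / (4 * Real.pi)) * ω ^ 2 * χ 0 ^ 2 / a 0 ∧
    (ω = 0 → rhoHat μ ω Λ ℓ χ a f 0 = 1 / f 0 ∧ 0 < rhoHat μ ω Λ ℓ χ a f 0) := by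
  have hρ := rhoHat_eq_of_eqC_of_deriv_eq_zero hC hχ'0 hf'0
  refine ⟨hρ, fun hω => ?_⟩
  have hρ₀ : rhoHat μ ω Λ ℓ χ a f 0 = 1 / f 0 := by
    rw [hρ, hω]
    ring
  exact ⟨hρ₀, hρ₀ ▸ one_div_pos.mpr hf0⟩

/-- at the throat, `ρ̂(0) = 1/f(0) - ((2ℓ+1)/(4π))·ω²·χ(0)²/a(0)`;
in particular for `ω = 0` the energy density is strictly positive there. -/
theorem energy_density_at_throat
    (μ ω Λ : ℝ) (ℓ : ℕ) (χ a f : ℝ → ℝ)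
    (ha0 : 0 < a 0) (hf0 : 0 < f 0)
    (hχ'0 : deriv χ 0 = 0) (ha'0 : deriv a 0 = 0) (hf'0 : deriv f 0 = 0)
    (hC : EqC μ ω Λ ℓ χ a f 0) :
    rhoHat μ ω Λ ℓ χ a f 0 =
      1 / f 0 - ((2 * (ℓ : ℝ) + 1) / (4 * Real.pi)) * ω ^ 2 * χ 0 ^ 2 / a 0 ∧
    (ω = 0 → rhoHat μ ω Λ ℓ χ a f 0 = 1 / f 0 ∧ 0 < rhoHat μ ω Λ ℓ χ a f 0) :=
  energy_density_at_throat_general μ ω Λ ℓ χ a f hf0 hχ'0 hf'0 hC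
end
end

section
/- Constraint propagation: let χ, a, f be smooth real functions on an interval I with a > 0 and f > 0 on I, satisfying the field equations (E1), (E2) and (E3) at every point of I. Define the constraint quantity Cq(r) = (f'/(2f))·(a' + a·f'/(2f)) - 1/f - ((2ℓ+1)/(8π))·[-a·χ'² + (μ² - Λ̃χ² - ω²/a + ℓ(ℓ+1)/f)·χ²]. Then the function r ↦ a(r)·f(r)²·Cq(r) is constant on I. In particular, if the constraint (C) holds at one point r₀ ∈ I (i.e., Cq(r₀) = 0), then it holds on all of I. -/
open Real Filter

noncomputable section

/-- The constraint quantity `Cq`: the constraint (C) asserts `Cq = 0`. -/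
def Cq (μ ω Λ : ℝ) (ℓ : ℕ) (χ a f : ℝ → ℝ) (r : ℝ) : ℝ :=
  (deriv f r / (2 * f r)) * (deriv a r + a r * deriv f r / (2 * f r)) - 1 / f r -
    ((2 * (ℓ : ℝ) + 1) / (8 * Real.pi)) *
      (-(a r) * deriv χ r ^ 2 +
        (μ ^ 2 - lamT Λ ℓ * χ r ^ 2 - ω ^ 2 / a r
          + (ℓ : ℝ) * ((ℓ : ℝ) + 1) / f r) * χ r ^ 2)

set_option maxHeartbeats 1600000 in
/-- constraint propagation. If (E1), (E2), (E3) hold on an open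
interval `I`, then `a·f²·Cq` is constant on `I`; in particular, if the
constraint holds at one point of `I`, it holds on all of `I`. -/
theorem constraint_propagation
    (μ ω Λ : ℝ) (ℓ : ℕ) (I : Set ℝ) (hIopen : IsOpen I) (hIconv : Convex ℝ I)
    (χ a f : ℝ → ℝ)
    (hχs : ContDiffOn ℝ (⊤ : ℕ∞) χ I) (has : ContDiffOn ℝ (⊤ : ℕ∞) a I) (hfs : ContDiffOn ℝ (⊤ : ℕ∞) f I)
    (hapos : ∀ r ∈ I, 0 < a r) (hfpos : ∀ r ∈ I, 0 < f r)
    (hE1 : ∀ r ∈ I, EqE1 μ ω Λ ℓ χ a f r)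
    (hE2 : ∀ r ∈ I, EqE2 μ ω Λ ℓ χ a f r)
    (hE3 : ∀ r ∈ I, EqE3 μ ω Λ ℓ χ a f r) :
    (∀ r ∈ I, ∀ s ∈ I,
      a r * f r ^ 2 * Cq μ ω Λ ℓ χ a f r = a s * f s ^ 2 * Cq μ ω Λ ℓ χ a f s) ∧
    (∀ r₀ ∈ I, Cq μ ω Λ ℓ χ a f r₀ = 0 → ∀ r ∈ I, Cq μ ω Λ ℓ χ a f r = 0) := by
  have hπ : (Real.pi : ℝ) ≠ 0 := Real.pi_ne_zero
  set K : ℝ := (2 * (ℓ : ℝ) + 1) / (4 * Real.pi) with hK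
  set Lt : ℝ := lamT Λ ℓ with hLt
  set L : ℝ := (ℓ : ℝ) * ((ℓ : ℝ) + 1) with hL
  set G : ℝ → ℝ := fun s =>
    (1 / 2) * (a s * (f s * (deriv f s * deriv a s))) +
      (1 / 4) * (a s ^ 2 * deriv f s ^ 2) - a s * f s +
      (K / 2) * (a s ^ 2 * (f s ^ 2 * deriv χ s ^ 2)) -
      (K / 2) * (a s * (f s ^ 2 * ((μ ^ 2 - Lt * χ s ^ 2) * χ s ^ 2))) -
      (K / 2) * (a s * (f s * (L * χ s ^ 2))) +
      (K / 2) * (ω ^ 2 * (f s ^ 2 * χ s ^ 2)) with hGdef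
  -- G agrees with a f² Cq on I
  have hGeq : ∀ r ∈ I, G r = a r * f r ^ 2 * Cq μ ω Λ ℓ χ a f r := by
    intro r hr
    have ha0 := (hapos r hr).ne'
    have hf0 := (hfpos r hr).ne'
    have h8 : (2 * (ℓ : ℝ) + 1) / (8 * Real.pi) = K / 2 := by rw [hK]; ring
    simp only [hGdef, Cq, ← hLt, ← hL]
    rw [h8]
    field_simp
    ring
  -- derivative facts
  have haC : ContDiffOn ℝ (⊤ : ℕ∞) (deriv a) I := has.deriv_of_isOpen hIopen (by simp)
  have hfC : ContDiffOn ℝ (⊤ : ℕ∞) (deriv f) I := hfs.deriv_of_isOpen hIopen (by simp)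
  have hχC : ContDiffOn ℝ (⊤ : ℕ∞) (deriv χ) I := hχs.deriv_of_isOpen hIopen (by simp)
  have hd : ∀ g : ℝ → ℝ, ContDiffOn ℝ (⊤ : ℕ∞) g I → ∀ r ∈ I, HasDerivAt g (deriv g r) r := by
    intro g hg r hr
    exact ((hg.differentiableOn (by simp)).differentiableAt (hIopen.mem_nhds hr)).hasDerivAt
  -- G has derivative 0 on I
  have hG0 : ∀ r ∈ I, HasDerivAt G 0 r := by
    intro r hr
    have ha := hd a has r hr
    have hf := hd f hfs r hr
    have hχ := hd χ hχs r hr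
    have ha' := hd (deriv a) haC r hr
    have hf' := hd (deriv f) hfC r hr
    have hχ' := hd (deriv χ) hχC r hr
    have t1 := (ha.mul (hf.mul (hf'.mul ha'))).const_mul ((1 : ℝ) / 2)
    have t2 := ((ha.pow 2).mul (hf'.pow 2)).const_mul ((1 : ℝ) / 4)
    have t3 := ha.mul hf
    have t4 := ((ha.pow 2).mul ((hf.pow 2).mul (hχ'.pow 2))).const_mul (K / 2)
    have t5 := (ha.mul ((hf.pow 2).mul
      ((((hχ.pow 2).const_mul Lt).const_sub (μ ^ 2)).mul (hχ.pow 2)))).const_mul (K / 2)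
    have t6 := (ha.mul (hf.mul ((hχ.pow 2).const_mul L))).const_mul (K / 2)
    have t7 := (((hf.pow 2).mul (hχ.pow 2)).const_mul (ω ^ 2)).const_mul (K / 2)
    have hG := ((((((t1.add t2).sub t3).add t4).sub t5).sub t6).add t7)
    refine hG.congr_deriv ?_
    symm
    have e1 := hE1 r hr
    have e2 := hE2 r hr
    have e3 := hE3 r hr
    simp only [EqE1, EqE2, EqE3, ← hLt, ← hL, ← hK] at e1 e2 e3
    rw [e1, e2, e3]
    have ha0 := (hapos r hr).ne'
    have hf0 := (hfpos r hr).ne'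
    simp only [Pi.mul_apply, Pi.pow_apply, Pi.add_apply, Pi.sub_apply]
    field_simp [hπ]
    ring
  -- G is constant on I
  have hGconst : ∀ r ∈ I, ∀ s ∈ I, G r = G s := by
    intro r hr s hs
    refine hIconv.is_const_of_fderivWithin_eq_zero
      (fun x hx => ((hG0 x hx).differentiableAt).differentiableWithinAt) ?_ hr hs
    intro x hx
    rw [fderivWithin_of_isOpen hIopen hx]
    exact ((hG0 x hx).hasFDerivAt.fderiv).trans (by ext; simp)
  constructor
  · intro r hr s hs
    rw [← hGeq r hr, ← hGeq s hs]
    exact hGconst r hr s hs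
  · intro r₀ hr₀ hC r hr
    have h1 : G r = 0 := by
      rw [hGconst r hr r₀ hr₀, hGeq r₀ hr₀, hC]; ring
    have h2 := (hGeq r hr).symm.trans h1
    have ha0 := (hapos r hr).ne'
    have hf0 := (hfpos r hr).ne'
    rcases mul_eq_zero.1 h2 with h | h
    · rcases mul_eq_zero.1 h with h | h
      · exact absurd h ha0
      · exact absurd h (pow_ne_zero 2 hf0)
    · exact h
end
end

section
/- Let Λ = 0 and let χ, a, f be smooth real functions on an open interval containing r_c, with a > 0 and f > 0, satisfying the field equation (E2) (with Λ = 0) on that interval. If a'(r_c) = 0 and χ(r_c) = 0, then a''(r_c) = 0, a'''(r_c) = 0, and a''''(r_c) = ((2ℓ+1)/(2π))·(μ² - 2ω²/a(r_c))·χ'(r_c)². In particular, if moreover μ² - 2ω²/a(r_c) < 0 and χ'(r_c) ≠ 0, then a has a strict local maximum at r_c. -/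
open Real Filter
open Topology

noncomputable section

private lemma sign_of_deriv_neg_punctured {p : ℝ → ℝ} {c δ : ℝ} (hδ : 0 < δ)
    (hcont : ContinuousOn p (Set.Icc (c - δ) (c + δ))) (hpc : p c = 0)
    (hleft : ∀ x ∈ Set.Ioo (c - δ) c, deriv p x < 0)
    (hright : ∀ x ∈ Set.Ioo c (c + δ), deriv p x < 0) :
    (∀ x ∈ Set.Ico (c - δ) c, 0 < p x) ∧ (∀ x ∈ Set.Ioc c (c + δ), p x < 0) := by
  constructor
  · intro x hx
    have hanti : StrictAntiOn p (Set.Icc (c - δ) c) := by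
      apply strictAntiOn_of_deriv_neg (convex_Icc _ _)
        (hcont.mono (Set.Icc_subset_Icc le_rfl (by linarith)))
      intro y hy; rw [interior_Icc] at hy; exact hleft y hy
    have h := hanti ⟨hx.1, hx.2.le⟩ ⟨by linarith, le_rfl⟩ hx.2
    rw [hpc] at h; exact h
  · intro x hx
    have hanti : StrictAntiOn p (Set.Icc c (c + δ)) := by
      apply strictAntiOn_of_deriv_neg (convex_Icc _ _)
        (hcont.mono (Set.Icc_subset_Icc (by linarith) le_rfl))
      intro y hy; rw [interior_Icc] at hy; exact hright y hy
    have h := hanti ⟨le_rfl, by linarith⟩ ⟨hx.1.le, hx.2⟩ hx.1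
    rw [hpc] at h; exact h

private lemma max_of_deriv_sign {p : ℝ → ℝ} {c δ : ℝ} (hδ : 0 < δ)
    (hcont : ContinuousOn p (Set.Icc (c - δ) (c + δ)))
    (hleft : ∀ x ∈ Set.Ioo (c - δ) c, 0 < deriv p x)
    (hright : ∀ x ∈ Set.Ioo c (c + δ), deriv p x < 0) :
    ∀ x ∈ Set.Icc (c - δ) (c + δ), x ≠ c → p x < p c := by
  intro x hx hne
  rcases lt_or_gt_of_ne hne with hlt | hgt
  · have hmono : StrictMonoOn p (Set.Icc (c - δ) c) := by
      apply strictMonoOn_of_deriv_pos (convex_Icc _ _)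
        (hcont.mono (Set.Icc_subset_Icc le_rfl (by linarith)))
      intro y hy; rw [interior_Icc] at hy; exact hleft y hy
    exact hmono ⟨hx.1, hlt.le⟩ ⟨by linarith, le_rfl⟩ hlt
  · have hanti : StrictAntiOn p (Set.Icc c (c + δ)) := by
      apply strictAntiOn_of_deriv_neg (convex_Icc _ _)
        (hcont.mono (Set.Icc_subset_Icc (by linarith) le_rfl))
      intro y hy; rw [interior_Icc] at hy; exact hright y hy
    exact hanti ⟨le_rfl, by linarith⟩ ⟨hgt.le, hx.2⟩ hgt


/-- key lemma for Theorem 1. With `Λ = 0`, at a critical point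
`r_c` of `a` where `χ(r_c) = 0`, one has `a''(r_c) = a'''(r_c) = 0` and
`a''''(r_c) = ((2ℓ+1)/(2π))·(μ² - 2ω²/a(r_c))·χ'(r_c)²`; if moreover
`μ² - 2ω²/a(r_c) < 0` and `χ'(r_c) ≠ 0`, then `a` has a strict local maximum
at `r_c`. -/
theorem lapse_fourth_derivative_at_critical_point
    (μ ω : ℝ) (ℓ : ℕ) (I : Set ℝ) (hIopen : IsOpen I) (hIconv : Convex ℝ I)
    (rc : ℝ) (hrc : rc ∈ I)
    (χ a f : ℝ → ℝ)
    (hχs : ContDiffOn ℝ (⊤ : ℕ∞) χ I) (has : ContDiffOn ℝ (⊤ : ℕ∞) a I) (hfs : ContDiffOn ℝ (⊤ : ℕ∞) f I)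
    (hapos : ∀ r ∈ I, 0 < a r) (hfpos : ∀ r ∈ I, 0 < f r)
    (hE2 : ∀ r ∈ I, EqE2 μ ω 0 ℓ χ a f r)
    (ha' : deriv a rc = 0) (hχc : χ rc = 0) :
    deriv (deriv a) rc = 0 ∧ iteratedDeriv 3 a rc = 0 ∧
    iteratedDeriv 4 a rc =
      ((2 * (ℓ : ℝ) + 1) / (2 * Real.pi)) * (μ ^ 2 - 2 * ω ^ 2 / a rc) * deriv χ rc ^ 2 ∧
    (μ ^ 2 - 2 * ω ^ 2 / a rc < 0 → deriv χ rc ≠ 0 →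
      ∃ δ > 0, ∀ x : ℝ, x ≠ rc → |x - rc| < δ → a x < a rc) :=   by
  have pi_pos := Real.pi_pos
  have hanz : ∀ r ∈ I, a r ≠ 0 := fun r hr => ne_of_gt (hapos r hr)
  have hfnz : ∀ r ∈ I, f r ≠ 0 := fun r hr => ne_of_gt (hfpos r hr)
  have hχ1 : ContDiffOn ℝ (⊤ : ℕ∞) (deriv χ) I := hχs.deriv_of_isOpen hIopen (by simp)
  have ha1 : ContDiffOn ℝ (⊤ : ℕ∞) (deriv a) I := has.deriv_of_isOpen hIopen (by simp)
  have hf1 : ContDiffOn ℝ (⊤ : ℕ∞) (deriv f) I := hfs.deriv_of_isOpen hIopen (by simp)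
  have ha2 : ContDiffOn ℝ (⊤ : ℕ∞) (deriv (deriv a)) I := ha1.deriv_of_isOpen hIopen (by simp)
  have hf2 : ContDiffOn ℝ (⊤ : ℕ∞) (deriv (deriv f)) I := hf1.deriv_of_isOpen hIopen (by simp)
  have HD : ∀ (u : ℝ → ℝ), ContDiffOn ℝ (⊤ : ℕ∞) u I → ∀ r ∈ I, HasDerivAt u (deriv u r) r := by
    intro u hu r hr
    exact ((hu.differentiableOn (by simp) r hr).differentiableAt (hIopen.mem_nhds hr)).hasDerivAt
  set g : ℝ → ℝ := fun x => -(deriv f x / f x) * deriv a x +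
      ((2 * (ℓ : ℝ) + 1) / (4 * Real.pi)) * ((μ ^ 2 - 2 * ω ^ 2 / a x) * χ x ^ 2) with hgdef
  have hE2' : ∀ r ∈ I, deriv (deriv a) r = g r := by
    intro r hr
    have h := hE2 r hr
    unfold EqE2 lamT at h
    rw [h]
    simp only [hgdef]
    ring
  have hgI : ContDiffOn ℝ (⊤ : ℕ∞) g I := by
    rw [hgdef]
    exact ((hf1.div hfs hfnz).neg.mul ha1).add
      (contDiffOn_const.mul ((contDiffOn_const.sub (contDiffOn_const.div has hanz)).mul
        (hχs.pow 2)))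
  have hA2 : deriv (deriv a) rc = 0 := by
    rw [hE2' rc hrc]
    simp only [hgdef]
    simp [ha', hχc]
  set g1 : ℝ → ℝ := fun x =>
      -((deriv (deriv f) x * f x - deriv f x * deriv f x) / f x ^ 2) * deriv a x
        + -(deriv f x / f x) * deriv (deriv a) x
        + ((2 * (ℓ : ℝ) + 1) / (4 * Real.pi)) *
          (2 * ω ^ 2 * deriv a x / a x ^ 2 * χ x ^ 2
            + (μ ^ 2 - 2 * ω ^ 2 / a x) * (2 * χ x * deriv χ x)) with hg1def
  have hgderiv : ∀ r ∈ I, HasDerivAt g (g1 r) r := by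
    intro r hr
    have Hf := HD f hfs r hr
    have Hf1 := HD (deriv f) hf1 r hr
    have Ha := HD a has r hr
    have Ha1 := HD (deriv a) ha1 r hr
    have Hχ := HD χ hχs r hr
    have H1 := (Hf1.div Hf (hfnz r hr)).neg.mul Ha1
    have H2 := (((hasDerivAt_const r (μ ^ 2)).sub
      ((hasDerivAt_const r (2 * ω ^ 2)).div Ha (hanz r hr))).mul (Hχ.pow 2)).const_mul
      ((2 * (ℓ : ℝ) + 1) / (4 * Real.pi))
    have H := H1.add H2
    simp only [hgdef, hg1def]
    refine H.congr_deriv ?_; symm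
    simp only [Pi.add_apply, Pi.sub_apply, Pi.mul_apply, Pi.div_apply, Pi.neg_apply, Pi.pow_apply]
    field_simp
    push_cast
    ring
  have hg1I : ContDiffOn ℝ (⊤ : ℕ∞) g1 I := by
    rw [hg1def]
    refine (ContDiffOn.add ?_ ?_).add ?_
    · exact ((((hf2.mul hfs).sub (hf1.mul hf1)).div (hfs.pow 2)
        (fun x hx => pow_ne_zero 2 (hfnz x hx))).neg).mul ha1
    · exact ((hf1.div hfs hfnz).neg).mul ha2
    · refine contDiffOn_const.mul (ContDiffOn.add ?_ ?_)
      · exact ((contDiffOn_const.mul ha1).div (has.pow 2)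
          (fun x hx => pow_ne_zero 2 (hanz x hx))).mul (hχs.pow 2)
      · exact (contDiffOn_const.sub (contDiffOn_const.div has hanz)).mul
          ((contDiffOn_const.mul hχs).mul hχ1)
  have hE3' : ∀ r ∈ I, deriv (deriv (deriv a)) r = g1 r := by
    intro r hr
    have h1 : deriv (deriv (deriv a)) r = deriv g r :=
      Filter.EventuallyEq.deriv_eq (Filter.eventuallyEq_of_mem (hIopen.mem_nhds hr) hE2')
    rw [h1, (hgderiv r hr).deriv]
  have hg10 : g1 rc = 0 := by
    simp only [hg1def]
    simp [ha', hχc, hA2]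
  have hA3 : deriv (deriv (deriv a)) rc = 0 := by rw [hE3' rc hrc]; exact hg10
  -- fourth derivative
  have Hf := HD f hfs rc hrc
  have Hf1 := HD (deriv f) hf1 rc hrc
  have Hf2 := HD (deriv (deriv f)) hf2 rc hrc
  have Ha := HD a has rc hrc
  have Ha1 := HD (deriv a) ha1 rc hrc
  have Ha2 := HD (deriv (deriv a)) ha2 rc hrc
  have Hχ := HD χ hχs rc hrc
  have Hχ1 := HD (deriv χ) hχ1 rc hrc
  have T1 := ((((Hf2.mul Hf).sub (Hf1.mul Hf1)).div (Hf.pow 2)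
    (pow_ne_zero 2 (hfnz rc hrc))).neg).mul Ha1
  have T2 := ((Hf1.div Hf (hfnz rc hrc)).neg).mul Ha2
  have T3a := ((Ha1.const_mul (2 * ω ^ 2)).div (Ha.pow 2)
    (pow_ne_zero 2 (hanz rc hrc))).mul (Hχ.pow 2)
  have T3b := ((hasDerivAt_const rc (μ ^ 2)).sub
    ((hasDerivAt_const rc (2 * ω ^ 2)).div Ha (hanz rc hrc))).mul ((Hχ.const_mul 2).mul Hχ1)
  have T3 := (T3a.add T3b).const_mul ((2 * (ℓ : ℝ) + 1) / (4 * Real.pi))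
  have HT := (T1.add T2).add T3
  have hval : HasDerivAt g1
      (((2 * (ℓ : ℝ) + 1) / (2 * Real.pi)) * (μ ^ 2 - 2 * ω ^ 2 / a rc) * deriv χ rc ^ 2)
      rc := by
    simp only [hg1def]
    refine HT.congr_deriv ?_; symm
    simp only [Pi.add_apply, Pi.sub_apply, Pi.mul_apply, Pi.div_apply, Pi.neg_apply, Pi.pow_apply]
    rw [ha', hχc, hA2, hA3]
    have hfne := hfnz rc hrc
    have hane := hanz rc hrc
    field_simp
    ring
  have hA4 : deriv (deriv (deriv (deriv a))) rc =
      ((2 * (ℓ : ℝ) + 1) / (2 * Real.pi)) * (μ ^ 2 - 2 * ω ^ 2 / a rc) * deriv χ rc ^ 2 := by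
    have h1 : deriv (deriv (deriv (deriv a))) rc = deriv g1 rc :=
      Filter.EventuallyEq.deriv_eq (Filter.eventuallyEq_of_mem (hIopen.mem_nhds hrc) hE3')
    rw [h1, hval.deriv]
  have hit3 : iteratedDeriv 3 a = deriv (deriv (deriv a)) := by
    rw [show (3 : ℕ) = 2 + 1 from rfl, iteratedDeriv_succ,
      show (2 : ℕ) = 1 + 1 from rfl, iteratedDeriv_succ, iteratedDeriv_one]
  have hit4 : iteratedDeriv 4 a = deriv (deriv (deriv (deriv a))) := by
    rw [show (4 : ℕ) = 3 + 1 from rfl, iteratedDeriv_succ, hit3]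
  refine ⟨hA2, by rw [hit3]; exact hA3, by rw [hit4]; exact hA4, ?_⟩
  intro hneg hχ'
  -- strict local maximum
  have hsqpos : 0 < deriv χ rc ^ 2 :=
    lt_of_le_of_ne (sq_nonneg _) (Ne.symm (pow_ne_zero 2 hχ'))
  have hcpos : 0 < (2 * (ℓ : ℝ) + 1) / (2 * Real.pi) := by positivity
  have hDneg : deriv g1 rc < 0 := by
    rw [hval.deriv]
    exact mul_neg_of_neg_of_pos (mul_neg_of_pos_of_neg hcpos hneg) hsqpos
  have hcontd : ContinuousAt (deriv g1) rc :=
    (hg1I.continuousOn_deriv_of_isOpen hIopen (by simp)).continuousAt (hIopen.mem_nhds hrc)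
  have hev : {x | x ∈ I ∧ deriv g1 x < 0} ∈ 𝓝 rc := by
    have h1 : I ∈ 𝓝 rc := hIopen.mem_nhds hrc
    have h2 : (deriv g1) ⁻¹' Set.Iio 0 ∈ 𝓝 rc :=
      hcontd.preimage_mem_nhds (Iio_mem_nhds hDneg)
    filter_upwards [h1, h2] with x hx1 hx2 using ⟨hx1, hx2⟩
  obtain ⟨ε, εpos, hball⟩ := Metric.mem_nhds_iff.mp hev
  refine ⟨ε / 2, by positivity, ?_⟩
  set δ : ℝ := ε / 2 with hδdef
  have δpos : 0 < δ := by positivity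
  have hsub : Set.Icc (rc - δ) (rc + δ) ⊆ Metric.ball rc ε := by
    intro x hx
    rw [Metric.mem_ball, Real.dist_eq, abs_lt]
    have h1 := hx.1; have h2 := hx.2
    constructor <;> [linarith [half_lt_self εpos]; linarith [half_lt_self εpos]]
  have hsubI : Set.Icc (rc - δ) (rc + δ) ⊆ I := fun x hx => (hball (hsub hx)).1
  have hg1neg : ∀ x ∈ Set.Icc (rc - δ) (rc + δ), deriv g1 x < 0 :=
    fun x hx => (hball (hsub hx)).2
  -- step 1 : sign of g1
  have hg1cont : ContinuousOn g1 (Set.Icc (rc - δ) (rc + δ)) := hg1I.continuousOn.mono hsubI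
  obtain ⟨hg1L, hg1R⟩ := sign_of_deriv_neg_punctured δpos hg1cont hg10
    (fun x hx => hg1neg x (Set.Ioo_subset_Icc_self ⟨hx.1, by linarith [hx.2]⟩))
    (fun x hx => hg1neg x (Set.Ioo_subset_Icc_self ⟨by linarith [hx.1], hx.2⟩))
  -- step 2 : g has a strict max, so g < 0 on punctured interval
  have hg0 : g rc = 0 := by rw [← hE2' rc hrc]; exact hA2
  have hmemI : ∀ x ∈ Set.Ioo (rc - δ) (rc + δ), x ∈ I :=
    fun x hx => hsubI (Set.Ioo_subset_Icc_self hx)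
  have hgmax : ∀ x ∈ Set.Icc (rc - δ) (rc + δ), x ≠ rc → g x < g rc := by
    apply max_of_deriv_sign δpos (hgI.continuousOn.mono hsubI)
    · intro x hx
      have hxI : x ∈ I := hmemI x ⟨hx.1, by linarith [hx.2]⟩
      rw [(hgderiv x hxI).deriv]
      exact hg1L x ⟨hx.1.le, hx.2⟩
    · intro x hx
      have hxI : x ∈ I := hmemI x ⟨by linarith [hx.1], hx.2⟩
      rw [(hgderiv x hxI).deriv]
      exact hg1R x ⟨hx.1, hx.2.le⟩
  -- step 3 : sign of deriv a
  obtain ⟨haL, haR⟩ := sign_of_deriv_neg_punctured δpos (ha1.continuousOn.mono hsubI) ha'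
    (fun x hx => by
      have hxI : x ∈ I := hmemI x ⟨hx.1, by linarith [hx.2]⟩
      rw [hE2' x hxI]
      have := hgmax x (Set.Icc_subset_Icc le_rfl (by linarith) (Set.Ioo_subset_Icc_self
        (⟨hx.1, by linarith [hx.2]⟩ : x ∈ Set.Ioo (rc - δ) (rc + δ)))) (ne_of_lt hx.2)
      rw [hg0] at this; exact this)
    (fun x hx => by
      have hxI : x ∈ I := hmemI x ⟨by linarith [hx.1], hx.2⟩
      rw [hE2' x hxI]
      have := hgmax x (Set.Ioo_subset_Icc_self
        (⟨by linarith [hx.1], hx.2⟩ : x ∈ Set.Ioo (rc - δ) (rc + δ))) (ne_of_gt hx.1)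
      rw [hg0] at this; exact this)
  -- step 4 : a has a strict max
  have hamax : ∀ x ∈ Set.Icc (rc - δ) (rc + δ), x ≠ rc → a x < a rc := by
    apply max_of_deriv_sign δpos (has.continuousOn.mono hsubI)
    · exact fun x hx => haL x ⟨hx.1.le, hx.2⟩
    · exact fun x hx => haR x ⟨hx.1, hx.2.le⟩
  intro x hne hdist
  have h1 : rc - δ ≤ x := by rw [abs_lt] at hdist; linarith [hdist.1]
  have h2 : x ≤ rc + δ := by rw [abs_lt] at hdist; linarith [hdist.2]
  exact hamax x ⟨h1, h2⟩ hne
end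
end

section
/- Let ω = 0, and let χ, a, f be smooth real functions on an open interval I containing r₀, with a > 0 and f > 0, satisfying the field equations (E1), (E3) and the constraint (C) on I. Suppose f'(r₀) = 0 and χ'(r₀) = 0. Then χ(r₀) ≠ 0, χ''(r₀) ≠ 0, f''(r₀) = 0, f'''(r₀) = 0, and f''''(r₀) = ((2ℓ+1)/(2π))·f(r₀)·χ''(r₀)² > 0; in particular, f has a strict local minimum at r₀. -/
open Real Filter

noncomputable section

open Topology Set

lemma fourth_deriv_test {f : ℝ → ℝ} {s : Set ℝ} (hs : IsOpen s) {r₀ : ℝ} (hr : r₀ ∈ s)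
    (hf : ContDiffOn ℝ (⊤ : ℕ∞) f s)
    (h1 : deriv f r₀ = 0) (h2 : deriv (deriv f) r₀ = 0)
    (h3 : deriv (deriv (deriv f)) r₀ = 0)
    (h4 : 0 < deriv (deriv (deriv (deriv f))) r₀) :
    ∃ δ > 0, ∀ x : ℝ, x ≠ r₀ → |x - r₀| < δ → f r₀ < f x := by
  have hf1 : ContDiffOn ℝ (⊤ : ℕ∞) (deriv f) s := hf.deriv_of_isOpen hs (by simp)
  have hf2 : ContDiffOn ℝ (⊤ : ℕ∞) (deriv (deriv f)) s := hf1.deriv_of_isOpen hs (by simp)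
  have hf3 : ContDiffOn ℝ (⊤ : ℕ∞) (deriv (deriv (deriv f))) s := hf2.deriv_of_isOpen hs (by simp)
  have hd3 : DifferentiableAt ℝ (deriv (deriv (deriv f))) r₀ :=
    (hf3.differentiableOn (by simp)).differentiableAt (hs.mem_nhds hr)
  have hslope := hasDerivAt_iff_tendsto_slope.mp hd3.hasDerivAt
  have hev : ∀ᶠ x in 𝓝[≠] r₀, 0 < slope (deriv (deriv (deriv f))) r₀ x :=
    hslope.eventually (eventually_gt_nhds h4)
  obtain ⟨ε, hε, hball⟩ := Metric.mem_nhdsWithin_iff.mp hev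
  obtain ⟨ε₀, hε₀, hball₀⟩ := Metric.isOpen_iff.mp hs r₀ hr
  set δ := min ε ε₀ / 2 with hδdef
  have hδ : 0 < δ := by positivity
  have hδε : δ < ε := by have := min_le_left ε ε₀; have := min_le_right ε ε₀; simp only [hδdef]; linarith
  have hδε₀ : δ < ε₀ := by have := min_le_left ε ε₀; have := min_le_right ε ε₀; simp only [hδdef]; linarith
  have hsub : Icc (r₀ - δ) (r₀ + δ) ⊆ s := by
    intro x hx
    apply hball₀
    rw [Metric.mem_ball, Real.dist_eq]
    have h1 := hx.1; have h2 := hx.2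
    have : |x - r₀| ≤ δ := abs_le.mpr ⟨by linarith, by linarith⟩
    linarith
  have hsubR : Icc r₀ (r₀ + δ) ⊆ s := fun x hx => hsub ⟨by linarith [hx.1], hx.2⟩
  have hsubL : Icc (r₀ - δ) r₀ ⊆ s := fun x hx => hsub ⟨hx.1, by linarith [hx.2]⟩
  -- sign of the third derivative near r₀
  have hsign : ∀ x : ℝ, x ≠ r₀ → |x - r₀| < ε →
      (r₀ < x → 0 < deriv (deriv (deriv f)) x) ∧ (x < r₀ → deriv (deriv (deriv f)) x < 0) := by
    intro x hx hxε
    have hmem : x ∈ Metric.ball r₀ ε ∩ {r₀}ᶜ := by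
      constructor
      · rw [Metric.mem_ball, Real.dist_eq]; exact hxε
      · exact hx
    have hp : 0 < slope (deriv (deriv (deriv f))) r₀ x := hball hmem
    rw [slope_def_field, h3, sub_zero] at hp
    constructor
    · intro hlt
      rcases div_pos_iff.mp hp with ⟨h, _⟩ | ⟨_, h⟩
      · exact h
      · linarith
    · intro hlt
      rcases div_pos_iff.mp hp with ⟨_, h⟩ | ⟨h, _⟩
      · linarith
      · exact h
  -- second derivative positive on punctured interval
  have hd2R : StrictMonoOn (deriv (deriv f)) (Icc r₀ (r₀ + δ)) := by
    apply strictMonoOn_of_deriv_pos (convex_Icc _ _) (hf2.continuousOn.mono hsubR)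
    intro x hx
    rw [interior_Icc] at hx
    exact (hsign x (ne_of_gt hx.1) (by rw [abs_of_pos (by linarith [hx.1])]; linarith [hx.2])).1 hx.1
  have hd2L : StrictAntiOn (deriv (deriv f)) (Icc (r₀ - δ) r₀) := by
    apply strictAntiOn_of_deriv_neg (convex_Icc _ _) (hf2.continuousOn.mono hsubL)
    intro x hx
    rw [interior_Icc] at hx
    exact (hsign x (ne_of_lt hx.2) (by rw [abs_of_neg (by linarith [hx.2])]; linarith [hx.1])).2 hx.2
  have hd2pos : ∀ x ∈ Icc (r₀ - δ) (r₀ + δ), x ≠ r₀ → 0 < deriv (deriv f) x := by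
    intro x hx hxne
    rcases lt_or_gt_of_ne hxne with h | h
    · have := hd2L ⟨hx.1, le_of_lt h⟩ ⟨by linarith [hδ], le_refl _⟩ h
      rw [h2] at this; exact this
    · have := hd2R ⟨le_refl _, by linarith [hδ]⟩ ⟨le_of_lt h, hx.2⟩ h
      rw [h2] at this; exact this
  -- first derivative: increasing through r₀
  have hd1R : StrictMonoOn (deriv f) (Icc r₀ (r₀ + δ)) := by
    apply strictMonoOn_of_deriv_pos (convex_Icc _ _) (hf1.continuousOn.mono hsubR)
    intro x hx
    rw [interior_Icc] at hx
    exact hd2pos x ⟨by linarith [hx.1], le_of_lt hx.2⟩ (ne_of_gt hx.1)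
  have hd1L : StrictMonoOn (deriv f) (Icc (r₀ - δ) r₀) := by
    apply strictMonoOn_of_deriv_pos (convex_Icc _ _) (hf1.continuousOn.mono hsubL)
    intro x hx
    rw [interior_Icc] at hx
    exact hd2pos x ⟨le_of_lt hx.1, by linarith [hx.2]⟩ (ne_of_lt hx.2)
  have hd1pos : ∀ x ∈ Icc r₀ (r₀ + δ), x ≠ r₀ → 0 < deriv f x := by
    intro x hx hxne
    have h := hd1R ⟨le_refl _, by linarith [hδ]⟩ hx (lt_of_le_of_ne hx.1 (Ne.symm hxne))
    rw [h1] at h; exact h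
  have hd1neg : ∀ x ∈ Icc (r₀ - δ) r₀, x ≠ r₀ → deriv f x < 0 := by
    intro x hx hxne
    have h := hd1L hx ⟨by linarith [hδ], le_refl _⟩ (lt_of_le_of_ne hx.2 hxne)
    rw [h1] at h; exact h
  -- f
  have hfR : StrictMonoOn f (Icc r₀ (r₀ + δ)) := by
    apply strictMonoOn_of_deriv_pos (convex_Icc _ _) (hf.continuousOn.mono hsubR)
    intro x hx
    rw [interior_Icc] at hx
    exact hd1pos x ⟨le_of_lt hx.1, le_of_lt hx.2⟩ (ne_of_gt hx.1)
  have hfL : StrictAntiOn f (Icc (r₀ - δ) r₀) := by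
    apply strictAntiOn_of_deriv_neg (convex_Icc _ _) (hf.continuousOn.mono hsubL)
    intro x hx
    rw [interior_Icc] at hx
    exact hd1neg x ⟨le_of_lt hx.1, le_of_lt hx.2⟩ (ne_of_lt hx.2)
  refine ⟨δ, hδ, ?_⟩
  intro x hxne hxδ
  rcases lt_or_gt_of_ne hxne with h | h
  · have hx1 : r₀ - δ ≤ x := by
      have := abs_lt.mp hxδ; linarith [this.1]
    exact hfL ⟨hx1, le_of_lt h⟩ ⟨by linarith [hδ], le_refl _⟩ h
  · have hx2 : x ≤ r₀ + δ := by
      have := abs_lt.mp hxδ; linarith [this.2]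
    exact hfR ⟨le_refl _, by linarith [hδ]⟩ ⟨le_of_lt h, hx2⟩ h

/-- key lemma for Theorem 2 in the exceptional case `ω = 0`. At a
point `r₀` where `f'(r₀) = 0` and `χ'(r₀) = 0`, the equations (E1), (E3) and (C)
force `χ(r₀) ≠ 0`, `χ''(r₀) ≠ 0`, `f''(r₀) = f'''(r₀) = 0` and
`f''''(r₀) = ((2ℓ+1)/(2π))·f(r₀)·χ''(r₀)² > 0`, so `f` has a strict local
minimum at `r₀`. -/
theorem sq_areal_radius_strict_min_omega_zero
    (μ Λ : ℝ) (ℓ : ℕ) (I : Set ℝ) (hIopen : IsOpen I) (hIconv : Convex ℝ I)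
    (r₀ : ℝ) (hr₀ : r₀ ∈ I)
    (χ a f : ℝ → ℝ)
    (hχs : ContDiffOn ℝ (⊤ : ℕ∞) χ I) (has : ContDiffOn ℝ (⊤ : ℕ∞) a I) (hfs : ContDiffOn ℝ (⊤ : ℕ∞) f I)
    (hapos : ∀ r ∈ I, 0 < a r) (hfpos : ∀ r ∈ I, 0 < f r)
    (hE1 : ∀ r ∈ I, EqE1 μ 0 Λ ℓ χ a f r)
    (hE3 : ∀ r ∈ I, EqE3 μ 0 Λ ℓ χ a f r)
    (hC : ∀ r ∈ I, EqC μ 0 Λ ℓ χ a f r)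
    (hf' : deriv f r₀ = 0) (hχ' : deriv χ r₀ = 0) :
    χ r₀ ≠ 0 ∧ deriv (deriv χ) r₀ ≠ 0 ∧
    deriv (deriv f) r₀ = 0 ∧ iteratedDeriv 3 f r₀ = 0 ∧
    iteratedDeriv 4 f r₀ =
      ((2 * (ℓ : ℝ) + 1) / (2 * Real.pi)) * f r₀ * deriv (deriv χ) r₀ ^ 2 ∧
    0 < iteratedDeriv 4 f r₀ ∧
    (∃ δ > 0, ∀ x : ℝ, x ≠ r₀ → |x - r₀| < δ → f r₀ < f x) := by
  have hπ : (0:ℝ) < Real.pi := Real.pi_pos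
  have DA : ∀ {g : ℝ → ℝ}, ContDiffOn ℝ (⊤ : ℕ∞) g I → ∀ {r : ℝ}, r ∈ I → DifferentiableAt ℝ g r :=
    by intro g hg r hr; exact (hg.differentiableOn (by simp)).differentiableAt (hIopen.mem_nhds hr)
  have hχ1s : ContDiffOn ℝ (⊤ : ℕ∞) (deriv χ) I := hχs.deriv_of_isOpen hIopen (by simp)
  have ha1s : ContDiffOn ℝ (⊤ : ℕ∞) (deriv a) I := has.deriv_of_isOpen hIopen (by simp)
  have ha2s : ContDiffOn ℝ (⊤ : ℕ∞) (deriv (deriv a)) I := ha1s.deriv_of_isOpen hIopen (by simp)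
  have hf1s : ContDiffOn ℝ (⊤ : ℕ∞) (deriv f) I := hfs.deriv_of_isOpen hIopen (by simp)
  have hf2s : ContDiffOn ℝ (⊤ : ℕ∞) (deriv (deriv f)) I := hf1s.deriv_of_isOpen hIopen (by simp)
  have hf3s : ContDiffOn ℝ (⊤ : ℕ∞) (deriv (deriv (deriv f))) I := hf2s.deriv_of_isOpen hIopen (by simp)
  have hane : ∀ r ∈ I, a r ≠ 0 := fun r hr => ne_of_gt (hapos r hr)
  have hfne : ∀ r ∈ I, f r ≠ 0 := fun r hr => ne_of_gt (hfpos r hr)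
  have hF0 : 0 < f r₀ := hfpos r₀ hr₀
  have hA0 : 0 < a r₀ := hapos r₀ hr₀
  -- constraint at r₀
  have hCon : ((μ ^ 2 - lamT Λ ℓ * χ r₀ ^ 2) * f r₀ + (ℓ:ℝ)*((ℓ:ℝ)+1)) * χ r₀ ^ 2 * (2*(ℓ:ℝ)+1)
      = -(8*Real.pi) := by
    have h := hC r₀ hr₀
    rw [EqC, hf', hχ'] at h
    field_simp at h
    have h2 : ((μ ^ 2 - lamT Λ ℓ * χ r₀ ^ 2) * f r₀ + (ℓ:ℝ)*((ℓ:ℝ)+1)) * χ r₀ ^ 2 * (2*(ℓ:ℝ)+1)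
        * f r₀ = (-(8*Real.pi)) * f r₀ := mul_left_cancel₀ (hane r₀ hr₀) (by linear_combination -h/4)
    exact mul_right_cancel₀ (hfne r₀ hr₀) h2
  -- χ(r₀) ≠ 0
  have hX0 : χ r₀ ≠ 0 := by
    intro h0
    rw [h0] at hCon
    norm_num at hCon
  -- E1 at r₀
  have hE10 : a r₀ * deriv (deriv χ) r₀ * f r₀
      = (μ^2 * f r₀ + (ℓ:ℝ)*((ℓ:ℝ)+1) - 2 * lamT Λ ℓ * χ r₀ ^ 2 * f r₀) * χ r₀ := by
    have h := hE1 r₀ hr₀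
    rw [EqE1, hf', hχ'] at h
    rw [h]
    field_simp
    ring
  -- f''(r₀) = 0
  have hF2 : deriv (deriv f) r₀ = 0 := by
    have h := hE3 r₀ hr₀
    rw [EqE3, hf'] at h
    rw [h]
    have expand : -(deriv a r₀) * 0 + 2 + (2 * (ℓ:ℝ) + 1) / (4 * Real.pi) *
          ((μ ^ 2 - lamT Λ ℓ * χ r₀ ^ 2) * f r₀ + (ℓ:ℝ) * ((ℓ:ℝ) + 1)) * χ r₀ ^ 2
        = 2 + (((μ ^ 2 - lamT Λ ℓ * χ r₀ ^ 2) * f r₀ + (ℓ:ℝ)*((ℓ:ℝ)+1)) * χ r₀ ^ 2 * (2*(ℓ:ℝ)+1)) / (4 * Real.pi) := by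
      field_simp
      ring
    rw [expand, hCon]
    field_simp
    ring
  -- χ''(r₀) ≠ 0
  have hX2ne : deriv (deriv χ) r₀ ≠ 0 := by
    intro h0
    rw [h0] at hE10
    have hz : (μ^2 * f r₀ + (ℓ:ℝ)*((ℓ:ℝ)+1) - 2 * lamT Λ ℓ * χ r₀ ^ 2 * f r₀) * χ r₀ = 0 := by
      rw [← hE10]; ring
    have heq : (μ^2 * f r₀ + (ℓ:ℝ)*((ℓ:ℝ)+1) - 2 * lamT Λ ℓ * χ r₀ ^ 2 * f r₀) = 0 := by
      rcases mul_eq_zero.mp hz with h | h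
      · exact h
      · exact absurd h hX0
    have heqm : (μ^2 * f r₀ + (ℓ:ℝ)*((ℓ:ℝ)+1) - 2 * lamT Λ ℓ * χ r₀ ^ 2 * f r₀) * χ r₀ ^ 2 * (2*(ℓ:ℝ)+1) = 0 := by
      rw [heq]; ring
    have hLnn : (0:ℝ) ≤ (ℓ:ℝ)*((ℓ:ℝ)+1) := by positivity
    nlinarith [hCon, heqm, mul_nonneg (mul_nonneg (mul_nonneg (sq_nonneg μ) hF0.le) (sq_nonneg (χ r₀))) (by positivity : (0:ℝ) ≤ 2*(ℓ:ℝ)+1), mul_nonneg (mul_nonneg hLnn (sq_nonneg (χ r₀))) (by positivity : (0:ℝ) ≤ 2*(ℓ:ℝ)+1), hπ]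
  -- key identity a * f'' = H on I
  have hHkey : ∀ r ∈ I, a r * deriv (deriv f) r
      = (-(deriv a r * deriv f r) + 2) + (2*(ℓ:ℝ)+1)/(4*Real.pi) *
        (((μ^2 - lamT Λ ℓ * (χ r * χ r)) * f r + (ℓ:ℝ)*((ℓ:ℝ)+1)) * (χ r * χ r)) := by
    intro r hr
    have h := hE3 r hr
    rw [EqE3] at h
    rw [h]
    field_simp [hane r hr]
  -- derivative of H on I
  have hH1 : ∀ r ∈ I, HasDerivAt (fun x => (-(deriv a x * deriv f x) + 2) + (2*(ℓ:ℝ)+1)/(4*Real.pi) *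
        (((μ^2 - lamT Λ ℓ * (χ x * χ x)) * f x + (ℓ:ℝ)*((ℓ:ℝ)+1)) * (χ x * χ x)))
      (-(deriv (deriv a) r * deriv f r + deriv a r * deriv (deriv f) r) + (2*(ℓ:ℝ)+1)/(4*Real.pi) *
        ((-(lamT Λ ℓ * (deriv χ r * χ r + χ r * deriv χ r)) * f r + (μ^2 - lamT Λ ℓ * (χ r * χ r)) * deriv f r) * (χ r * χ r)
          + ((μ^2 - lamT Λ ℓ * (χ r * χ r)) * f r + (ℓ:ℝ)*((ℓ:ℝ)+1)) * (deriv χ r * χ r + χ r * deriv χ r))) r := by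
    intro r hr
    have dA1 : HasDerivAt (deriv a) (deriv (deriv a) r) r := (DA ha1s hr).hasDerivAt
    have dF1 : HasDerivAt (deriv f) (deriv (deriv f) r) r := (DA hf1s hr).hasDerivAt
    have dF : HasDerivAt f (deriv f r) r := (DA hfs hr).hasDerivAt
    have dX : HasDerivAt χ (deriv χ r) r := (DA hχs hr).hasDerivAt
    have hXX : HasDerivAt (fun x => χ x * χ x) (deriv χ r * χ r + χ r * deriv χ r) r := dX.mul dX
    have hμ : HasDerivAt (fun x => μ^2 - lamT Λ ℓ * (χ x * χ x))
        (-(lamT Λ ℓ * (deriv χ r * χ r + χ r * deriv χ r))) r := (hXX.const_mul (lamT Λ ℓ)).const_sub (μ^2)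
    have hW : HasDerivAt (fun x => (μ^2 - lamT Λ ℓ * (χ x * χ x)) * f x + (ℓ:ℝ)*((ℓ:ℝ)+1))
        (-(lamT Λ ℓ * (deriv χ r * χ r + χ r * deriv χ r)) * f r + (μ^2 - lamT Λ ℓ * (χ r * χ r)) * deriv f r) r :=
      (hμ.mul dF).add_const _
    exact ((dA1.mul dF1).neg.add_const 2).add ((hW.mul hXX).const_mul _)
  -- uniqueness: formula for a'f'' + af''' on I
  have hKH1 : ∀ r ∈ I, deriv a r * deriv (deriv f) r + a r * deriv (deriv (deriv f)) r
      = -(deriv (deriv a) r * deriv f r + deriv a r * deriv (deriv f) r) + (2*(ℓ:ℝ)+1)/(4*Real.pi) *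
        ((-(lamT Λ ℓ * (deriv χ r * χ r + χ r * deriv χ r)) * f r + (μ^2 - lamT Λ ℓ * (χ r * χ r)) * deriv f r) * (χ r * χ r)
          + ((μ^2 - lamT Λ ℓ * (χ r * χ r)) * f r + (ℓ:ℝ)*((ℓ:ℝ)+1)) * (deriv χ r * χ r + χ r * deriv χ r)) := by
    intro r hr
    have dA : HasDerivAt a (deriv a r) r := (DA has hr).hasDerivAt
    have dF2 : HasDerivAt (deriv (deriv f)) (deriv (deriv (deriv f)) r) r := (DA hf2s hr).hasDerivAt
    have hΦ : HasDerivAt (fun x => a x * deriv (deriv f) x)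
        (deriv a r * deriv (deriv f) r + a r * deriv (deriv (deriv f)) r) r := dA.mul dF2
    have hev : (fun x => (-(deriv a x * deriv f x) + 2) + (2*(ℓ:ℝ)+1)/(4*Real.pi) *
        (((μ^2 - lamT Λ ℓ * (χ x * χ x)) * f x + (ℓ:ℝ)*((ℓ:ℝ)+1)) * (χ x * χ x)))
        =ᶠ[𝓝 r] (fun x => a x * deriv (deriv f) x) :=
      Filter.eventuallyEq_of_mem (hIopen.mem_nhds hr) (fun x hx => (hHkey x hx).symm)
    exact (hΦ.congr_of_eventuallyEq hev).unique (hH1 r hr)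
  -- f'''(r₀) = 0
  have hF3 : deriv (deriv (deriv f)) r₀ = 0 := by
    have h := hKH1 r₀ hr₀
    rw [hf', hχ', hF2] at h
    have hz : a r₀ * deriv (deriv (deriv f)) r₀ = 0 := by linear_combination h
    exact (mul_eq_zero.mp hz).resolve_left (hane r₀ hr₀)
  -- fourth derivative at r₀
  have dA : HasDerivAt a (deriv a r₀) r₀ := (DA has hr₀).hasDerivAt
  have dA1 : HasDerivAt (deriv a) (deriv (deriv a) r₀) r₀ := (DA ha1s hr₀).hasDerivAt
  have dA2 : HasDerivAt (deriv (deriv a)) (deriv (deriv (deriv a)) r₀) r₀ := (DA ha2s hr₀).hasDerivAt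
  have dF : HasDerivAt f (deriv f r₀) r₀ := (DA hfs hr₀).hasDerivAt
  have dF1 : HasDerivAt (deriv f) (deriv (deriv f) r₀) r₀ := (DA hf1s hr₀).hasDerivAt
  have dF2 : HasDerivAt (deriv (deriv f)) (deriv (deriv (deriv f)) r₀) r₀ := (DA hf2s hr₀).hasDerivAt
  have dF3 : HasDerivAt (deriv (deriv (deriv f))) (deriv (deriv (deriv (deriv f))) r₀) r₀ := (DA hf3s hr₀).hasDerivAt
  have dX : HasDerivAt χ (deriv χ r₀) r₀ := (DA hχs hr₀).hasDerivAt
  have dX1 : HasDerivAt (deriv χ) (deriv (deriv χ) r₀) r₀ := (DA hχ1s hr₀).hasDerivAt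
  have hXX : HasDerivAt (fun x => χ x * χ x) (deriv χ r₀ * χ r₀ + χ r₀ * deriv χ r₀) r₀ := dX.mul dX
  have hXX1 : HasDerivAt (fun x => deriv χ x * χ x + χ x * deriv χ x)
      (deriv (deriv χ) r₀ * χ r₀ + deriv χ r₀ * deriv χ r₀
        + (deriv χ r₀ * deriv χ r₀ + χ r₀ * deriv (deriv χ) r₀)) r₀ := (dX1.mul dX).add (dX.mul dX1)
  have hμ : HasDerivAt (fun x => μ^2 - lamT Λ ℓ * (χ x * χ x))
      (-(lamT Λ ℓ * (deriv χ r₀ * χ r₀ + χ r₀ * deriv χ r₀))) r₀ := (hXX.const_mul (lamT Λ ℓ)).const_sub (μ^2)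
  have hlam1 := (hXX1.const_mul (lamT Λ ℓ)).neg
  have hu1 := hlam1.mul dF
  have hu2 := hμ.mul dF1
  have hv1 := (hu1.add hu2).mul hXX
  have hW := (hμ.mul dF).add_const ((ℓ:ℝ)*((ℓ:ℝ)+1))
  have hv2 := hW.mul hXX1
  have ht1 := (dA2.mul dF1).add (dA1.mul dF2)
  have hH1d := (ht1.neg).add ((hv1.add hv2).const_mul ((2*(ℓ:ℝ)+1)/(4*Real.pi)))
  have hKd : HasDerivAt (fun x => deriv a x * deriv (deriv f) x + a x * deriv (deriv (deriv f)) x)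
      (deriv (deriv a) r₀ * deriv (deriv f) r₀ + deriv a r₀ * deriv (deriv (deriv f)) r₀
        + (deriv a r₀ * deriv (deriv (deriv f)) r₀ + a r₀ * deriv (deriv (deriv (deriv f))) r₀)) r₀ :=
    (dA1.mul dF2).add (dA.mul dF3)
  have hevK : (fun x => deriv a x * deriv (deriv f) x + a x * deriv (deriv (deriv f)) x)
      =ᶠ[𝓝 r₀] (fun x => -(deriv (deriv a) x * deriv f x + deriv a x * deriv (deriv f) x) + (2*(ℓ:ℝ)+1)/(4*Real.pi) *
        ((-(lamT Λ ℓ * (deriv χ x * χ x + χ x * deriv χ x)) * f x + (μ^2 - lamT Λ ℓ * (χ x * χ x)) * deriv f x) * (χ x * χ x)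
          + ((μ^2 - lamT Λ ℓ * (χ x * χ x)) * f x + (ℓ:ℝ)*((ℓ:ℝ)+1)) * (deriv χ x * χ x + χ x * deriv χ x))) :=
    Filter.eventuallyEq_of_mem (hIopen.mem_nhds hr₀) (fun x hx => hKH1 x hx)
  have huniq := hKd.unique (hH1d.congr_of_eventuallyEq hevK)
  rw [hf', hχ', hF2, hF3] at huniq
  simp only [Pi.mul_apply, Pi.neg_apply, Pi.add_apply] at huniq
  have hF4 : a r₀ * deriv (deriv (deriv (deriv f))) r₀
      = 2 * ((2*(ℓ:ℝ)+1)/(4*Real.pi)) * χ r₀ * deriv (deriv χ) r₀ *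
        ((μ^2 - lamT Λ ℓ * χ r₀^2) * f r₀ + (ℓ:ℝ)*((ℓ:ℝ)+1) - lamT Λ ℓ * χ r₀^2 * f r₀) := by
    linear_combination huniq
  have hF4eq : deriv (deriv (deriv (deriv f))) r₀
      = (2*(ℓ:ℝ)+1)/(2*Real.pi) * f r₀ * deriv (deriv χ) r₀ ^ 2 := by
    have hstep : a r₀ * deriv (deriv (deriv (deriv f))) r₀ * χ r₀
        = a r₀ * ((2*(ℓ:ℝ)+1)/(2*Real.pi) * f r₀ * deriv (deriv χ) r₀ ^ 2) * χ r₀ := by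
      linear_combination χ r₀ * hF4 - 2 * ((2*(ℓ:ℝ)+1)/(4*Real.pi)) * χ r₀ * deriv (deriv χ) r₀ * hE10
    exact mul_left_cancel₀ (hane r₀ hr₀) (mul_right_cancel₀ hX0 hstep)
  have hF4pos : 0 < deriv (deriv (deriv (deriv f))) r₀ := by
    rw [hF4eq]
    have hX2sq : 0 < deriv (deriv χ) r₀ ^ 2 :=
      lt_of_le_of_ne (sq_nonneg _) (Ne.symm (pow_ne_zero 2 hX2ne))
    positivity
  -- iterated derivatives
  have hit3 : iteratedDeriv 3 f = deriv (deriv (deriv f)) := by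
    simp [iteratedDeriv_succ, iteratedDeriv_zero]
  have hit4 : iteratedDeriv 4 f = deriv (deriv (deriv (deriv f))) := by
    simp [iteratedDeriv_succ, iteratedDeriv_zero]
  refine ⟨hX0, hX2ne, hF2, by rw [hit3]; exact hF3, by rw [hit4]; exact hF4eq,
    by rw [hit4]; exact hF4pos, ?_⟩
  exact fourth_deriv_test hIopen hr₀ hfs hf' hF2 hF3 hF4pos
end
end

section
/- The Ellis–Bronnikov wormhole solves the wormhole system: let b > 0 and take parameters ℓ = 0, μ = 0, ω = 0 and Λ = 0. Then the functions a(r) = 1, f(r) = b² + r², and χ(r) = √(8π)·arctan(r/b), defined for all r ∈ ℝ, satisfy the field equations (E1), (E2), (E3) and the constraint (C) at every r ∈ ℝ. -/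
/-! With `a ≡ 1` and `ℓ = μ = ω = Λ = 0`, (E2) holds trivially, (E3) reduces to `f'' = 2`,
(E1) to `(f χ')' = 0` and (C) to `f'²/(4f²) - 1/f = -χ'²/(8π)`. For `f = b² + r²` one has
`f'' = 2` and `f'²/4 - f = -b²`, while `χ = √(8π) arctan(r/b)` has `f χ' = √(8π) b`, a constant
whose square `8π b²` is exactly what (C) demands. -/

open Real Filter

noncomputable section

section ZeroParameters

variable {χ f : ℝ → ℝ} {r : ℝ}

theorem eqE1_zero_one_iff :
    EqE1 0 0 0 0 χ (fun _ => 1) f r ↔ deriv (deriv χ) r = -(deriv f r / f r) * deriv χ r := by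
  simp [EqE1, lamT]

theorem eqE2_zero_one : EqE2 0 0 0 0 χ (fun _ => 1) f r := by
  simp [EqE2, lamT]

theorem eqE3_zero_one_iff : EqE3 0 0 0 0 χ (fun _ => 1) f r ↔ deriv (deriv f) r = 2 := by
  simp [EqE3, lamT]

theorem eqC_zero_one_iff :
    EqC 0 0 0 0 χ (fun _ => 1) f r ↔
      (deriv f r / (2 * f r)) ^ 2 - 1 / f r = -(deriv χ r ^ 2 / (8 * π)) := by
  simp only [EqC, lamT, deriv_const', CharP.cast_eq_zero, zero_pow two_ne_zero]
  ring_nf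

end ZeroParameters

section ArctanDiv

variable {b : ℝ} (hb : b ≠ 0) (c : ℝ)
include hb

theorem hasDerivAt_const_mul_arctan_div (s : ℝ) :
    HasDerivAt (fun s => c * arctan (s / b)) (c * b / (b ^ 2 + s ^ 2)) s := by
  refine (((hasDerivAt_id' s).div_const b).arctan.const_mul c).congr_deriv ?_
  field_simp

theorem deriv_const_mul_arctan_div :
    deriv (fun s => c * arctan (s / b)) = fun s => c * b / (b ^ 2 + s ^ 2) :=
  funext fun s => (hasDerivAt_const_mul_arctan_div hb c s).deriv

theorem deriv_deriv_const_mul_arctan_div (s : ℝ) :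
    deriv (deriv fun s => c * arctan (s / b)) s = -(c * b * (2 * s)) / (b ^ 2 + s ^ 2) ^ 2 := by
  rw [deriv_const_mul_arctan_div hb]
  refine ((hasDerivAt_const s (c * b)).div ((hasDerivAt_pow 2 s).const_add (b ^ 2))
    (by positivity)).deriv.trans ?_
  simp

end ArctanDiv

theorem deriv_sq_add_sq (b : ℝ) : deriv (fun s : ℝ => b ^ 2 + s ^ 2) = fun s => 2 * s := by
  ext s; simp

theorem deriv_deriv_sq_add_sq (b s : ℝ) : deriv (deriv fun s : ℝ => b ^ 2 + s ^ 2) s = 2 := by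
  rw [deriv_sq_add_sq]; simp

/-- the Ellis–Bronnikov wormhole `a = 1`, `f = b² + r²`,
`χ = √(8π)·arctan(r/b)` solves (E1), (E2), (E3) and (C) with parameters
`ℓ = 0`, `μ = 0`, `ω = 0`, `Λ = 0`. -/
theorem ellis_bronnikov_solves_system (b : ℝ) (hb : 0 < b) (r : ℝ) :
    EqE1 0 0 0 0 (fun s => Real.sqrt (8 * Real.pi) * Real.arctan (s / b))
        (fun _ => 1) (fun s => b ^ 2 + s ^ 2) r ∧
    EqE2 0 0 0 0 (fun s => Real.sqrt (8 * Real.pi) * Real.arctan (s / b))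
        (fun _ => 1) (fun s => b ^ 2 + s ^ 2) r ∧
    EqE3 0 0 0 0 (fun s => Real.sqrt (8 * Real.pi) * Real.arctan (s / b))
        (fun _ => 1) (fun s => b ^ 2 + s ^ 2) r ∧
    EqC 0 0 0 0 (fun s => Real.sqrt (8 * Real.pi) * Real.arctan (s / b))
        (fun _ => 1) (fun s => b ^ 2 + s ^ 2) r := by
  have hf : b ^ 2 + r ^ 2 ≠ 0 := by positivity
  have hsqrt : √(8 * π) ^ 2 = 8 * π := sq_sqrt (by positivity)
  refine ⟨eqE1_zero_one_iff.2 ?_, eqE2_zero_one, eqE3_zero_one_iff.2 ?_, eqC_zero_one_iff.2 ?_⟩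
  · rw [deriv_deriv_const_mul_arctan_div hb.ne', deriv_const_mul_arctan_div hb.ne', deriv_sq_add_sq]
    field_simp
  · exact deriv_deriv_sq_add_sq b r
  · rw [deriv_const_mul_arctan_div hb.ne', deriv_sq_add_sq]
    simp only [div_pow, mul_pow, hsqrt]
    field_simp
    ring
end
end

section
/- Asymptotic vacuum solution: let c₀, c₁ ∈ ℝ, and on the interval {r : r + c₁ > 0} define a(r) = exp(-c₀/(r + c₁)) and f(r) = (r + c₁)²·exp(c₀/(r + c₁)). Then these functions satisfy the vacuum field equations (f·a')' = 0 and f'·a' + a·f'' = 2 at every point of that interval. -/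
open Real

noncomputable section

/-- The asymptotic lapse `a(r) = exp(-c₀/(r + c₁))`. -/
def aVac (c₀ c₁ : ℝ) (r : ℝ) : ℝ := Real.exp (-(c₀ / (r + c₁)))

/-- The asymptotic squared areal radius `f(r) = (r + c₁)²·exp(c₀/(r + c₁))`. -/
def fVac (c₀ c₁ : ℝ) (r : ℝ) : ℝ := (r + c₁) ^ 2 * Real.exp (c₀ / (r + c₁))

/-! With `x = r + c₁`, the exponentials in `f = x² e^{c₀/x}` and `a' = (c₀/x²) e^{-c₀/x}` cancel,
so the flux `f·a'` is the constant `c₀`, which is the first equation. The second is a direct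
computation of `f'` and `f''`, again with the exponentials cancelling. -/

open Filter Topology

lemma hasDerivAt_div_add_const (c d s : ℝ) (hs : s + d ≠ 0) :
    HasDerivAt (fun r => c / (r + d)) (-(c / (s + d) ^ 2)) s := by
  refine ((hasDerivAt_const s c).div ((hasDerivAt_id s).add_const d) hs).congr_deriv ?_
  simp [neg_div]

section

variable {c₀ c₁ s : ℝ}

lemma hasDerivAt_aVac (hs : s + c₁ ≠ 0) :
    HasDerivAt (aVac c₀ c₁) (c₀ / (s + c₁) ^ 2 * exp (-(c₀ / (s + c₁)))) s := by
  refine (hasDerivAt_div_add_const c₀ c₁ s hs).fun_neg.exp.congr_deriv ?_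
  ring

lemma hasDerivAt_fVac (hs : s + c₁ ≠ 0) :
    HasDerivAt (fVac c₀ c₁) ((2 * (s + c₁) - c₀) * exp (c₀ / (s + c₁))) s := by
  have hsq : HasDerivAt (fun r => (r + c₁) ^ 2) (2 * (s + c₁)) s := by
    simpa using ((hasDerivAt_id s).add_const c₁).fun_pow 2
  refine (hsq.fun_mul (hasDerivAt_div_add_const c₀ c₁ s hs).exp).congr_deriv ?_
  field_simp
  ring

lemma fVac_mul_deriv_aVac (hs : s + c₁ ≠ 0) :
    fVac c₀ c₁ s * deriv (aVac c₀ c₁) s = c₀ := by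
  rw [(hasDerivAt_aVac hs).deriv, fVac, exp_neg]
  field_simp

lemma eventually_add_const_ne_zero (hs : s + c₁ ≠ 0) : ∀ᶠ r in 𝓝 s, r + c₁ ≠ 0 :=
  (continuous_add_const c₁).continuousAt.eventually_ne hs

lemma deriv_fVac_eventuallyEq (hs : s + c₁ ≠ 0) :
    deriv (fVac c₀ c₁) =ᶠ[𝓝 s] fun r => (2 * (r + c₁) - c₀) * exp (c₀ / (r + c₁)) := by
  filter_upwards [eventually_add_const_ne_zero hs] with r hr
  exact (hasDerivAt_fVac hr).deriv

lemma hasDerivAt_deriv_fVac (hs : s + c₁ ≠ 0) :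
    HasDerivAt (deriv (fVac c₀ c₁))
      ((2 - c₀ * (2 * (s + c₁) - c₀) / (s + c₁) ^ 2) * exp (c₀ / (s + c₁))) s := by
  refine HasDerivAt.congr_of_eventuallyEq ?_ (deriv_fVac_eventuallyEq hs)
  have hlin : HasDerivAt (fun r => 2 * (r + c₁) - c₀) 2 s := by
    simpa using (((hasDerivAt_id s).add_const c₁).const_mul 2).sub_const c₀
  refine (hlin.fun_mul (hasDerivAt_div_add_const c₀ c₁ s hs).exp).congr_deriv ?_
  field_simp
  ring

end

/-- the asymptotic metric functions solve the vacuum equations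
`(f·a')' = 0` and `f'·a' + a·f'' = 2` on the region where `r + c₁ > 0`. -/
theorem asymptotic_vacuum_solution (c₀ c₁ : ℝ) (r : ℝ) (hr : 0 < r + c₁) :
    deriv (fun s => fVac c₀ c₁ s * deriv (aVac c₀ c₁) s) r = 0 ∧
    deriv (fVac c₀ c₁) r * deriv (aVac c₀ c₁) r +
      aVac c₀ c₁ r * deriv (deriv (fVac c₀ c₁)) r = 2 := by
  have hr₀ : r + c₁ ≠ 0 := hr.ne'
  constructor
  · have hflux : (fun s => fVac c₀ c₁ s * deriv (aVac c₀ c₁) s) =ᶠ[𝓝 r] fun _ => c₀ := by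
      filter_upwards [eventually_add_const_ne_zero hr₀] with s hs
      exact fVac_mul_deriv_aVac hs
    rw [hflux.deriv_eq, deriv_const]
  · rw [(hasDerivAt_fVac hr₀).deriv, (hasDerivAt_aVac hr₀).deriv,
      (hasDerivAt_deriv_fVac hr₀).deriv, aVac, exp_neg]
    field_simp
    ring
end
end

section
/- The frequency ω and the self-interaction parameter Λ cannot both vanish: suppose a(0) > 0, f(0) > 0, the throat boundary conditions χ'(0) = a'(0) = f'(0) = 0 hold, χ(0) ≠ 0, and the constraint (C) holds at r = 0. Then it is impossible that both ω = 0 and Λ = 0. -/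
open Real Filter

noncomputable section

/-- the frequency `ω` and the self-interaction `Λ` cannot both
vanish for a wormhole throat: the constraint (C) at the throat forbids
`ω = 0 ∧ Λ = 0`. -/
theorem omega_lambda_not_both_zero
    (μ ω Λ : ℝ) (ℓ : ℕ) (χ a f : ℝ → ℝ)
    (ha0 : 0 < a 0) (hf0 : 0 < f 0)
    (hχ'0 : deriv χ 0 = 0) (ha'0 : deriv a 0 = 0) (hf'0 : deriv f 0 = 0)
    (hχ0 : χ 0 ≠ 0)
    (hC : EqC μ ω Λ ℓ χ a f 0) :
    ¬(ω = 0 ∧ Λ = 0) := by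
  rintro ⟨rfl, rfl⟩
  unfold EqC lamT at hC
  simp only [hχ'0, ha'0, hf'0] at hC
  norm_num at hC
  have hπ : 0 < Real.pi := Real.pi_pos
  have h1 : (0:ℝ) < 1 / f 0 := by positivity
  have hℓ : (0:ℝ) ≤ (ℓ:ℝ) := Nat.cast_nonneg ℓ
  have key : (0:ℝ) ≤ (2 * (ℓ:ℝ) + 1) / (8 * Real.pi) *
      ((μ ^ 2 + (ℓ:ℝ) * ((ℓ:ℝ) + 1) / f 0) * χ 0 ^ 2) := by positivity
  rw [one_div] at h1
  linarith
end
end
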